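/- arXiv:2501.01561 — 6 statements merged into one kernel-verified Lean document; each statement's English description precedes it below -/
import Mathlib

section
/- Assuming the Continuum Hypothesis, there exists a Ramsey ultrafilter on ℕ, i.e., a nonprincipal ultrafilter 𝒰 such that for all k, m ∈ ℕ and every function f from k-element subsets of ℕ to {0,...,m-1}, there exists H ∈ 𝒰 on whose k-element subsets f is constant. -/
open Set


/-- `f` is constant on `k`-element subsets of `H`. -/
def RamseyHomog (k : ℕ) {m : ℕ} (f : Finset ℕ → Fin m) (H : Set ℕ) : Prop :=
  ∀ s t : Finset ℕ, s.card = k → t.card = k →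
    (s : Set ℕ) ⊆ H → (t : Set ℕ) ⊆ H → f s = f t

/-- Infinite Ramsey theorem. -/
theorem infinite_ramsey (k : ℕ) {m : ℕ} (f : Finset ℕ → Fin m) (A : Set ℕ)
    (hA : A.Infinite) : ∃ H, H ⊆ A ∧ H.Infinite ∧ RamseyHomog k f H := by
  induction k generalizing m f A with
  | zero =>
    refine ⟨A, Subset.rfl, hA, fun s t hs ht _ _ => ?_⟩
    rw [Finset.card_eq_zero.mp hs, Finset.card_eq_zero.mp ht]
  | succ k ih =>
    haveI hne : Nonempty (Fin m) := ⟨f ∅⟩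
    have hstep : ∀ B : Set ℕ, B.Infinite →
        ∃ C, C ⊆ B ∩ Ioi (sInf B) ∧ C.Infinite ∧
          RamseyHomog k (fun s => f (insert (sInf B) s)) C := by
      intro B hB
      have hsub : B \ Iic (sInf B) ⊆ B ∩ Ioi (sInf B) := by
        intro x hx
        exact ⟨hx.1, (lt_of_not_ge fun h => hx.2 h : sInf B < x)⟩
      have hinf : (B ∩ Ioi (sInf B)).Infinite :=
        (hB.diff (finite_Iic _)).mono hsub
      exact ih _ _ hinf
    choose g hg1 hg2 hg3 using hstep
    let F : ℕ → {B : Set ℕ // B.Infinite} := fun n =>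
      Nat.rec ⟨A, hA⟩ (fun _ p => ⟨g p.1 p.2, hg2 p.1 p.2⟩) n
    have hFsucc : ∀ n, (F (n + 1)).1 ⊆ (F n).1 ∩ Ioi (sInf (F n).1) :=
      fun n => hg1 _ _
    have hamem : ∀ n, sInf (F n).1 ∈ (F n).1 := fun n => Nat.sInf_mem (F n).2.nonempty
    have hFmono : ∀ n p : ℕ, n ≤ p → (F p).1 ⊆ (F n).1 := by
      intro n p h
      induction h with
      | refl => exact Subset.rfl
      | step h ih2 => exact ((hFsucc _).trans inter_subset_left).trans ih2
    set a : ℕ → ℕ := fun n => sInf (F n).1 with ha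
    have hlt : ∀ n, a n < a (n + 1) := by
      intro n
      exact (hFsucc n (hamem (n + 1))).2
    have hmono : StrictMono a := strictMono_nat_of_lt_succ hlt
    have hhom : ∀ n, RamseyHomog k (fun s => f (insert (a n) s)) (F (n + 1)).1 :=
      fun n => hg3 _ _
    have hu : ∀ n : ℕ, ∃ u : Finset ℕ, (u : Set ℕ) ⊆ (F (n + 1)).1 ∧ u.card = k :=
      fun n => (F (n + 1)).2.exists_subset_card_eq k
    choose u hu1 hu2 using hu
    set c : ℕ → Fin m := fun n => f (insert (a n) (u n)) with hc
    obtain ⟨v, hv⟩ := Finite.exists_infinite_fiber c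
    have hN : (c ⁻¹' {v}).Infinite := infinite_coe_iff.mp hv
    refine ⟨a '' (c ⁻¹' {v}), ?_, hN.image (hmono.injective.injOn), ?_⟩
    · rintro y ⟨n, -, rfl⟩
      exact hFmono 0 n (Nat.zero_le n) (hamem n)
    · have key : ∀ s : Finset ℕ, s.card = k + 1 → (s : Set ℕ) ⊆ a '' (c ⁻¹' {v}) →
          f s = v := by
        intro s hcard hsub
        have hsne : s.Nonempty := Finset.card_pos.mp (by omega)
        set x := s.min' hsne with hxdef
        have hxs : x ∈ s := s.min'_mem hsne
        obtain ⟨n, hnN, hxn⟩ := hsub hxs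
        have hs' : ((s.erase x : Finset ℕ) : Set ℕ) ⊆ (F (n + 1)).1 := by
          intro y hy
          have hys : y ∈ s.erase x := hy
          have hyS : y ∈ s := Finset.mem_of_mem_erase hys
          obtain ⟨j, hjN, hyj⟩ := hsub hyS
          have hxy : x < y :=
            lt_of_le_of_ne (Finset.min'_le s y hyS) (Finset.ne_of_mem_erase hys).symm
          have hnj : n < j := by
            have : a n < a j := by rw [hxn, hyj]; exact hxy
            exact hmono.lt_iff_lt.mp this
          rw [← hyj]
          exact hFmono (n + 1) j hnj (hamem j)
        have hcard' : (s.erase x).card = k := by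
          rw [Finset.card_erase_of_mem hxs, hcard]; omega
        have h1 : f s = f (insert (a n) (s.erase x)) := by
          rw [hxn, Finset.insert_erase hxs]
        have h2 := hhom n (s.erase x) (u n) hcard' (hu2 n) hs' (hu1 n)
        rw [h1]
        exact h2.trans hnN
      intro s t hs ht hs2 ht2
      rw [key s hs hs2, key t ht ht2]

/-- A countable ⊆*-chain of infinite subsets of ℕ has an infinite pseudo-intersection. -/
theorem exists_pseudo_inter (S : Set (Set ℕ)) (hc : S.Countable)
    (hinf : ∀ B ∈ S, B.Infinite)
    (hchain : ∀ B ∈ S, ∀ C ∈ S, (B \ C).Finite ∨ (C \ B).Finite) :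
    ∃ D : Set ℕ, D.Infinite ∧ ∀ B ∈ S, (D \ B).Finite := by
  rcases S.eq_empty_or_nonempty with rfl | hS
  · exact ⟨univ, infinite_univ, by simp⟩
  obtain ⟨e, rfl⟩ := hc.exists_eq_range hS
  have hmin : ∀ n : ℕ, ∃ j ≤ n, ∀ i ≤ n, (e j \ e i).Finite := by
    intro n
    induction n with
    | zero =>
      refine ⟨0, le_rfl, fun i hi => ?_⟩
      rw [Nat.le_zero.mp hi]; simp
    | succ n ihn =>
      obtain ⟨j, hj, hjmin⟩ := ihn
      rcases hchain (e j) ⟨j, rfl⟩ (e (n + 1)) ⟨n + 1, rfl⟩ with h | h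
      · refine ⟨j, hj.trans (Nat.le_succ n), fun i hi => ?_⟩
        rcases eq_or_ne i (n + 1) with rfl | hne
        · exact h
        · exact hjmin i (by omega)
      · refine ⟨n + 1, le_rfl, fun i hi => ?_⟩
        rcases eq_or_ne i (n + 1) with rfl | hne
        · simp
        · refine ((h.union (hjmin i (by omega))).subset ?_)
          intro x hx
          by_cases hxj : x ∈ e j
          · exact Or.inr ⟨hxj, hx.2⟩
          · exact Or.inl ⟨hx.1, hxj⟩
  set C : ℕ → Set ℕ := fun n => ⋂ i ∈ Finset.range (n + 1), e i with hCdef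
  have hCsub : ∀ n, ∀ i ≤ n, C n ⊆ e i := by
    intro n i hi
    intro x hx
    simp only [hCdef, mem_iInter] at hx
    exact hx i (Finset.mem_range.mpr (by omega))
  have hCinf : ∀ n, (C n).Infinite := by
    intro n
    obtain ⟨j, hj, hjmin⟩ := hmin n
    have h1 : (e j \ C n).Finite := by
      have hsub : e j \ C n ⊆ ⋃ i ∈ Finset.range (n + 1), (e j \ e i) := by
        intro x hx
        have hx2 : ∃ i ∈ Finset.range (n + 1), x ∉ e i := by
          by_contra hcon
          push_neg at hcon
          exact hx.2 (by simp only [hCdef, mem_iInter]; exact fun i hi => hcon i hi)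
        obtain ⟨i, hi, hxe⟩ := hx2
        exact mem_biUnion hi ⟨hx.1, hxe⟩
      exact (Set.Finite.biUnion (Finset.range (n + 1)).finite_toSet
        (fun i hi => hjmin i (by simpa [Nat.lt_succ_iff] using hi))).subset hsub
    have h2 : (e j \ (e j \ C n)).Infinite := (hinf (e j) ⟨j, rfl⟩).diff h1
    refine h2.mono ?_
    intro x hx
    rcases em (x ∈ C n) with h | h
    · exact h
    · exact absurd ⟨hx.1, h⟩ hx.2
  have hCmono : ∀ n p : ℕ, n ≤ p → C p ⊆ C n := by
    intro n p h x hx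
    simp only [hCdef, mem_iInter, Finset.mem_range] at hx ⊢
    intro i hi
    exact hx i (by omega)
  have hex : ∀ x : ℕ, ∀ n : ℕ, ∃ y ∈ C n, x < y := fun x n => (hCinf n).exists_gt x
  choose sb hsb1 hsb2 using hex
  set b : ℕ → ℕ := fun n => Nat.rec (sb 0 0) (fun n p => sb p (n + 1)) n with hbdef
  have hb1 : ∀ n, b n ∈ C n := by
    intro n
    cases n with
    | zero => exact hsb1 0 0
    | succ n => exact hsb1 (b n) (n + 1)
  have hb2 : ∀ n, b n < b (n + 1) := fun n => hsb2 (b n) (n + 1)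
  have hbmono : StrictMono b := strictMono_nat_of_lt_succ hb2
  refine ⟨range b, infinite_range_of_injective hbmono.injective, ?_⟩
  rintro B ⟨mB, rfl⟩
  refine ((finite_Iio mB).image b).subset ?_
  rintro x ⟨⟨n, rfl⟩, hx⟩
  refine ⟨n, ?_, rfl⟩
  by_contra h
  exact hx (hCsub n mB (by simpa using h) (hb1 n))

/-- The index type for colorings: a number `k` together with an `m`-coloring of finsets. -/
abbrev RamseyIdx : Type := ℕ × Σ m : ℕ, (Finset ℕ → Fin m)

/-- The transfinite tower of sets, indexed by the ordinal `ω₁`. At each stage we choose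
(via `Classical.epsilon`) an infinite set almost-contained in all previous stages and
homogeneous for the coloring assigned to this stage by `g`. -/
noncomputable def ramseyTower (g : (Cardinal.aleph.{0} 1).ord.ToType → RamseyIdx) :
    (Cardinal.aleph.{0} 1).ord.ToType → Set ℕ :=
  WellFounded.fix wellFounded_lt fun i rec =>
    Classical.epsilon fun H : Set ℕ =>
      H.Infinite ∧ (∀ j, ∀ h : j < i, (H \ rec j h).Finite) ∧
        RamseyHomog (g i).1 (g i).2.2 H

theorem ramseyTower_spec (g : (Cardinal.aleph.{0} 1).ord.ToType → RamseyIdx) :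
    ∀ i : (Cardinal.aleph.{0} 1).ord.ToType,
    (ramseyTower g i).Infinite ∧
      (∀ j, j < i → (ramseyTower g i \ ramseyTower g j).Finite) ∧
      RamseyHomog (g i).1 (g i).2.2 (ramseyTower g i) := by
  refine fun i => WellFounded.induction (C := fun i => (ramseyTower g i).Infinite ∧
      (∀ j, j < i → (ramseyTower g i \ ramseyTower g j).Finite) ∧
      RamseyHomog (g i).1 (g i).2.2 (ramseyTower g i)) wellFounded_lt i fun i ih => ?_
  have hfix : ramseyTower g i = Classical.epsilon fun H : Set ℕ =>
      H.Infinite ∧ (∀ j, ∀ _ : j < i, (H \ ramseyTower g j).Finite) ∧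
        RamseyHomog (g i).1 (g i).2.2 H := by
    rw [ramseyTower, WellFounded.fix_eq]
  have hex : ∃ H : Set ℕ, H.Infinite ∧ (∀ j, ∀ _ : j < i, (H \ ramseyTower g j).Finite) ∧
      RamseyHomog (g i).1 (g i).2.2 H := by
    have hcnt : (ramseyTower g '' Set.Iio i).Countable := by
      refine Set.Countable.image ?_ _
      exact (Cardinal.countable_iff_lt_aleph_one _).mpr (Cardinal.mk_Iio_ord_toType i)
    obtain ⟨D, hD1, hD2⟩ := exists_pseudo_inter (ramseyTower g '' Set.Iio i) hcnt
      (by rintro B ⟨j, hj, rfl⟩; exact (ih j hj).1)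
      (by
        rintro B ⟨j, hj, rfl⟩ C ⟨j', hj', rfl⟩
        rcases lt_trichotomy j j' with h | rfl | h
        · exact Or.inr ((ih j' hj').2.1 j h)
        · exact Or.inl (by simp)
        · exact Or.inl ((ih j hj).2.1 j' h))
    obtain ⟨H, hH1, hH2, hH3⟩ := infinite_ramsey (g i).1 (g i).2.2 D hD1
    refine ⟨H, hH2, fun j hj => ?_, hH3⟩
    exact (hD2 _ ⟨j, hj, rfl⟩).subset (Set.diff_subset_diff_left hH1)
  rw [hfix]
  exact Classical.epsilon_spec hex

/-- An ultrafilter on ℕ is *Ramsey* if it is nonprincipal (contains no finite set) and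
for all `k m : ℕ` and every coloring `f` of the `k`-element subsets of ℕ by `m` colors,
there is a set `H` in the ultrafilter on whose `k`-element subsets `f` is constant. -/
def IsRamseyUltrafilter (U : Ultrafilter ℕ) : Prop :=
  (∀ A : Set ℕ, A.Finite → A ∉ U) ∧
  ∀ (k m : ℕ) (f : Finset ℕ → Fin m),
    ∃ H ∈ U, ∀ s t : Finset ℕ, s.card = k → t.card = k →
      (s : Set ℕ) ⊆ H → (t : Set ℕ) ⊆ H → f s = f t

theorem mk_ramseyIdx_le_continuum : Cardinal.mk RamseyIdx ≤ Cardinal.continuum := by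
  have h1 : ∀ m : ℕ, Cardinal.mk (Finset ℕ → Fin m) ≤ Cardinal.continuum := by
    intro m
    have : Cardinal.mk (Finset ℕ → Fin m) = (m : Cardinal) ^ (Cardinal.aleph0) := by
      rw [Cardinal.mk_arrow]
      simp [Cardinal.mk_fin, Cardinal.mk_eq_aleph0]
    rw [this]
    calc (m : Cardinal) ^ (Cardinal.aleph0 : Cardinal)
        ≤ Cardinal.continuum ^ (Cardinal.aleph0 : Cardinal) :=
          Cardinal.power_le_power_right (Cardinal.nat_lt_continuum m).le
      _ = Cardinal.continuum := Cardinal.continuum_power_aleph0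
  have h2 : Cardinal.mk (Σ m : ℕ, (Finset ℕ → Fin m)) ≤ Cardinal.continuum := by
    rw [Cardinal.mk_sigma]
    calc (Cardinal.sum fun m : ℕ => Cardinal.mk (Finset ℕ → Fin m))
        ≤ Cardinal.sum fun _ : ℕ => Cardinal.continuum := Cardinal.sum_le_sum _ _ h1
      _ = Cardinal.mk ℕ * Cardinal.continuum := Cardinal.sum_const' _ _
      _ = Cardinal.aleph0 * Cardinal.continuum := by rw [Cardinal.mk_nat]
      _ ≤ Cardinal.continuum * Cardinal.continuum :=
          mul_le_mul_left Cardinal.aleph0_le_continuum _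
      _ = Cardinal.continuum := Cardinal.mul_eq_self Cardinal.aleph0_le_continuum
  calc Cardinal.mk RamseyIdx
      = Cardinal.mk ℕ * Cardinal.mk (Σ m : ℕ, (Finset ℕ → Fin m)) := by
        rw [Cardinal.mk_prod]; simp
    _ ≤ Cardinal.continuum * Cardinal.continuum := by
        rw [Cardinal.mk_nat]
        exact mul_le_mul' Cardinal.aleph0_le_continuum h2
    _ = Cardinal.continuum := Cardinal.mul_eq_self Cardinal.aleph0_le_continuum

/-- Assuming the Continuum Hypothesis, Ramsey ultrafilters on ℕ exist. -/
theorem exists_ramsey_ultrafilter_of_CH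
    (hCH : Cardinal.continuum = Cardinal.aleph 1) :
    ∃ U : Ultrafilter ℕ, IsRamseyUltrafilter U := by
  classical
  have hCH0 : Cardinal.continuum.{0} = Cardinal.aleph.{0} 1 := by
    have h : Cardinal.lift.{u_1, 0} Cardinal.continuum.{0}
        = Cardinal.lift.{u_1, 0} (Cardinal.aleph.{0} 1) := by
      rw [Cardinal.lift_continuum, Cardinal.lift_aleph, Ordinal.lift_one]
      exact hCH
    exact Cardinal.lift_inj.mp h
  set T := (Cardinal.aleph.{0} 1).ord.ToType with hT
  haveI hTne : Nonempty T := by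
    refine Ordinal.nonempty_toType_iff.mpr ?_
    intro h0
    have := Cardinal.card_ord (Cardinal.aleph.{0} 1)
    rw [h0] at this
    simp only [Ordinal.card_zero] at this
    have hpos := Cardinal.aleph0_lt_aleph_one.{0}
    rw [← this] at hpos
    exact absurd hpos (by simp)
  haveI : Nonempty RamseyIdx := ⟨(0, ⟨1, fun _ => 0⟩)⟩
  have hle : Cardinal.mk RamseyIdx ≤ Cardinal.mk T := by
    rw [hT, Cardinal.mk_toType, Cardinal.card_ord]
    exact mk_ramseyIdx_le_continuum.trans_eq hCH0
  obtain ⟨φ⟩ := (Cardinal.le_def _ _).mp hle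
  set g : T → RamseyIdx := Function.invFun φ with hgdef
  have hg : ∀ c : RamseyIdx, g (φ c) = c := Function.leftInverse_invFun φ.injective
  have spec := ramseyTower_spec g
  have key : ∀ p q : T, p ≤ q → (ramseyTower g q \ ramseyTower g p).Finite := by
    intro p q h
    rcases eq_or_lt_of_le h with rfl | h
    · simp
    · exact (spec q).2.1 p h
  have hdir : ∀ i j : T, ∃ l, (ramseyTower g l \ ramseyTower g i).Finite ∧
      (ramseyTower g l \ ramseyTower g j).Finite := by
    intro i j
    rcases le_total i j with h | h
    · exact ⟨j, key i j h, by simp⟩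
    · exact ⟨i, by simp, key j i h⟩
  let F : Filter ℕ :=
    { sets := {X | ∃ i, (ramseyTower g i \ X).Finite}
      univ_sets := ⟨Classical.arbitrary T, by simp⟩
      sets_of_superset := by
        rintro X Y ⟨i, hi⟩ hXY
        exact ⟨i, hi.subset (Set.diff_subset_diff_right hXY)⟩
      inter_sets := by
        rintro X Y ⟨i, hi⟩ ⟨j, hj⟩
        obtain ⟨l, hl1, hl2⟩ := hdir i j
        refine ⟨l, (((hl1.union hi).union (hl2.union hj)).subset ?_)⟩
        intro x hx
        by_cases hxX : x ∈ X
        · have hxY : x ∉ Y := fun hY => hx.2 ⟨hxX, hY⟩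
          by_cases hxj : x ∈ ramseyTower g j
          · exact Or.inr (Or.inr ⟨hxj, hxY⟩)
          · exact Or.inr (Or.inl ⟨hx.1, hxj⟩)
        · by_cases hxi : x ∈ ramseyTower g i
          · exact Or.inl (Or.inr ⟨hxi, hxX⟩)
          · exact Or.inl (Or.inl ⟨hx.1, hxi⟩) }
  have hmemF : ∀ X : Set ℕ, X ∈ F ↔ ∃ i, (ramseyTower g i \ X).Finite := fun X => Iff.rfl
  have hdec : ∀ X : Set ℕ, X ∈ F ∨ Xᶜ ∈ F := by
    intro X
    set fX : Finset ℕ → Fin 2 := fun s => if ∀ x ∈ s, x ∈ X then 1 else 0 with hfX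
    set cI : RamseyIdx := (1, ⟨2, fX⟩) with hcI
    have hhom := (spec (φ cI)).2.2
    rw [hg cI] at hhom
    obtain ⟨x₀, hx₀⟩ := (spec (φ cI)).1.nonempty
    have hsing : ∀ y : ℕ, y ∈ ramseyTower g (φ cI) → fX {y} = fX {x₀} := by
      intro y hy
      exact hhom {y} {x₀} (Finset.card_singleton y) (Finset.card_singleton x₀)
        (by simpa using hy) (by simpa using hx₀)
    by_cases hx : x₀ ∈ X
    · left
      rw [hmemF]
      refine ⟨φ cI, ?_⟩
      have hsub : ramseyTower g (φ cI) ⊆ X := by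
        intro y hy
        have h1 := hsing y hy
        have h2 : fX {x₀} = 1 := if_pos (by simpa using hx)
        by_contra hyX
        have h3 : fX {y} = 0 := if_neg (by simpa using hyX)
        rw [h3, h2] at h1
        exact absurd h1 (by decide)
      rw [Set.diff_eq_empty.mpr hsub]
      exact Set.finite_empty
    · right
      rw [hmemF]
      refine ⟨φ cI, ?_⟩
      have hsub : ramseyTower g (φ cI) ⊆ Xᶜ := by
        intro y hy
        intro hyX
        have h1 := hsing y hy
        have h2 : fX {x₀} = 0 := if_neg (by simpa using hx)
        have h3 : fX {y} = 1 := if_pos (by simpa using hyX)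
        rw [h3, h2] at h1
        exact absurd h1 (by decide)
      rw [Set.diff_eq_empty.mpr hsub]
      exact Set.finite_empty
  have hproper : ∀ X : Set ℕ, X ∈ F → Xᶜ ∉ F := by
    intro X hX hXc
    obtain ⟨i, hi⟩ := (hmemF X).mp hX
    obtain ⟨j, hj⟩ := (hmemF Xᶜ).mp hXc
    obtain ⟨l, hl1, hl2⟩ := hdir i j
    have hfin : (ramseyTower g l).Finite := by
      refine (((hl1.union hi).union (hl2.union hj)).subset ?_)
      intro x hx
      by_cases hxX : x ∈ X
      · by_cases hxj : x ∈ ramseyTower g j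
        · exact Or.inr (Or.inr ⟨hxj, fun h => h hxX⟩)
        · exact Or.inr (Or.inl ⟨hx, hxj⟩)
      · by_cases hxi : x ∈ ramseyTower g i
        · exact Or.inl (Or.inr ⟨hxi, hxX⟩)
        · exact Or.inl (Or.inl ⟨hx, hxi⟩)
    exact (spec l).1 hfin
  have hiff : ∀ X : Set ℕ, Xᶜ ∉ F ↔ X ∈ F := by
    intro X
    constructor
    · intro h
      rcases hdec X with h1 | h2
      · exact h1
      · exact absurd h2 h
    · intro h
      exact hproper X h
  refine ⟨Ultrafilter.ofComplNotMemIff F hiff, ?_, ?_⟩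
  · intro A hAfin hAU
    have hAF : A ∈ F := hAU
    obtain ⟨i, hi⟩ := (hmemF A).mp hAF
    have : (ramseyTower g i).Finite := by
      refine (hi.union hAfin).subset ?_
      intro x hx
      by_cases h : x ∈ A
      · exact Or.inr h
      · exact Or.inl ⟨hx, h⟩
    exact (spec i).1 this
  · intro k m f
    set cI : RamseyIdx := (k, ⟨m, f⟩) with hcI
    have hhom := (spec (φ cI)).2.2
    rw [hg cI] at hhom
    refine ⟨ramseyTower g (φ cI), ?_, hhom⟩
    show ramseyTower g (φ cI) ∈ F
    rw [hmemF]
    exact ⟨φ cI, by simp⟩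
end

section
/- Let T be a well-founded increasing tree on ℕ (each node is a strictly increasing finite sequence of naturals, T is closed under initial segments, and T has no infinite branch). Then there does not exist an infinite increasing sequence j₁ < j₂ < ⋯ of naturals such that for all n, the set {j₁, ..., jₙ} is a subset of (the range of) some element Aₙ of T. -/
/-- Membership in `takeWhile (· ≤ a)` for a sorted list. -/
lemma mem_takeWhile_of_sorted {l : List ℕ} (hl : l.Pairwise (· < ·)) {a x : ℕ}
    (hx : x ∈ l) (hxa : x ≤ a) : x ∈ l.takeWhile (fun y => y ≤ a) := by
  induction l with
  | nil => simp at hx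
  | cons b t ih =>
    rcases List.pairwise_cons.1 hl with ⟨hb, ht⟩
    rcases List.mem_cons.1 hx with rfl | hx'
    · simp [List.takeWhile_cons, hxa]
    · have hba : b ≤ a := le_of_lt (lt_of_lt_of_le (hb x hx') hxa)
      simp only [List.takeWhile_cons, decide_eq_true_eq, hba, if_pos]
      exact List.mem_cons_of_mem _ (ih ht hx')

/-- The set of sorted lists of naturals with entries bounded by `N` is finite. -/
lemma finite_sorted_bounded (N : ℕ) :
    {l : List ℕ | l.Pairwise (· < ·) ∧ ∀ x ∈ l, x ≤ N}.Finite := by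
  apply Set.Finite.of_finite_image (f := List.toFinset)
  · apply Set.Finite.subset ((Finset.range (N + 1)).powerset : Finset (Finset ℕ)).finite_toSet
    rintro s ⟨l, ⟨hs, hb⟩, rfl⟩
    simp only [Finset.coe_powerset, Set.mem_preimage, Set.mem_powerset_iff, Finset.coe_range]
    intro x hx
    exact Set.mem_Iio.2 (Nat.lt_succ_of_le (hb x (List.mem_toFinset.1 hx)))
  · rintro l₁ ⟨h₁, -⟩ l₂ ⟨h₂, -⟩ h
    have n₁ : l₁.Nodup := h₁.imp ne_of_lt
    have n₂ : l₂.Nodup := h₂.imp ne_of_lt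
    exact List.Perm.eq_of_pairwise (fun a b _ _ hab hba => absurd (lt_trans hab hba) (lt_irrefl a)) h₁ h₂ (List.perm_of_nodup_nodup_toFinset_eq n₁ n₂ h)

/-- Pigeonhole: a function eventually taking values in a finite set takes some value
frequently. -/
lemma freq_const {β : Type*} {S : Set β} (hS : S.Finite) (f : ℕ → β) (n₀ : ℕ)
    (hf : ∀ m, n₀ ≤ m → f m ∈ S) :
    ∃ b, ∀ m, ∃ m', m ≤ m' ∧ n₀ ≤ m' ∧ f m' = b := by
  have : Finite ↥S := hS.to_subtype
  obtain ⟨⟨b, hbS⟩, hb⟩ := Finite.exists_infinite_fiber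
    (fun m : ℕ => (⟨f (n₀ + m), hf _ (Nat.le_add_right _ _)⟩ : S))
  refine ⟨b, fun m => ?_⟩
  have hinf : ((fun m : ℕ => (⟨f (n₀ + m), hf _ (Nat.le_add_right _ _)⟩ : S)) ⁻¹'
      {⟨b, hbS⟩} : Set ℕ).Infinite := Set.infinite_coe_iff.1 hb
  obtain ⟨k, hk, hmk⟩ := hinf.exists_gt m
  refine ⟨n₀ + k, le_of_lt (lt_of_lt_of_le hmk (Nat.le_add_left _ _)), Nat.le_add_right _ _, ?_⟩
  have := Set.mem_preimage.1 hk
  simpa using congrArg Subtype.val (Set.mem_singleton_iff.1 this)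

/-- If `T` is a well-founded increasing tree on ℕ (a set of strictly increasing finite
sequences of naturals, closed under initial segments, with no infinite branch), then there
is no infinite strictly increasing sequence `j₀ < j₁ < ⋯` such that for every `n` the set
`{j₀, …, jₙ}` is contained in (the range of) some element `A n` of `T`. -/
theorem no_increasing_sequence_covered_by_wellfounded_tree
    (T : Set (List ℕ))
    (hclosed : ∀ l ∈ T, ∀ l' : List ℕ, l' <+: l → l' ∈ T)
    (hinc : ∀ l ∈ T, l.Chain' (· < ·))
    (hwf : ¬ ∃ x : ℕ → ℕ, ∀ n : ℕ, (List.ofFn fun i : Fin n => x i) ∈ T) :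
    ¬ ∃ j : ℕ → ℕ, StrictMono j ∧ ∃ A : ℕ → List ℕ,
      ∀ n : ℕ, A n ∈ T ∧ ∀ i ≤ n, j i ∈ A n := by
  rintro ⟨j, hj, A, hA⟩
  have hsorted : ∀ l ∈ T, l.Pairwise (· < ·) :=
    fun l hl => List.isChain_iff_pairwise.1 (hinc l hl)
  -- truncation at level n
  set trunc : ℕ → List ℕ → List ℕ := fun n l => l.takeWhile (fun y => y ≤ j n) with htruncdef
  -- levels
  set P : ℕ → Set (List ℕ) :=
    fun n => {l | l ∈ T ∧ (∀ x ∈ l, x ≤ j n) ∧ ∀ i ≤ n, j i ∈ l} with hPdef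
  have htrunc_mem : ∀ n l, l ∈ T → (∀ i ≤ n, j i ∈ l) → trunc n l ∈ P n := by
    intro n l hlT hjl
    refine ⟨hclosed l hlT _ (List.takeWhile_prefix _), ?_, ?_⟩
    · intro x hx
      simpa using List.mem_takeWhile_imp hx
    · intro i hi
      exact mem_takeWhile_of_sorted (hsorted l hlT) (hjl i hi) (hj.monotone hi)
  have htrunc_comp : ∀ n m, n ≤ m → ∀ l, trunc n (trunc m l) = trunc n l := by
    intro n m hnm l
    simp only [htruncdef, List.takeWhile_takeWhile]
    congr 1
    funext a
    by_cases h : a ≤ j n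
    · simp [h, le_trans h (hj.monotone hnm)]
    · simp [h]
  have hPfin : ∀ n, (P n).Finite := by
    intro n
    apply (finite_sorted_bounded (j n)).subset
    rintro l ⟨hlT, hb, -⟩
    exact ⟨hsorted l hlT, hb⟩
  have hPne : ∀ n, (P n).Nonempty := by
    intro n
    exact ⟨trunc n (A n), htrunc_mem n (A n) (hA n).1 (hA n).2⟩
  -- levels of the pruned tree
  set Q : ℕ → Set (List ℕ) :=
    fun n => {l | l ∈ P n ∧ ∀ m, n ≤ m → ∃ l' ∈ P m, trunc n l' = l} with hQdef
  have hQne : ∀ n, (Q n).Nonempty := by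
    intro n
    choose c hc using hPne
    have hf : ∀ m, n ≤ m → trunc n (c m) ∈ P n := by
      intro m hm
      exact htrunc_mem n (c m) (hc m).1 (fun i hi => (hc m).2.2 i (le_trans hi hm))
    obtain ⟨b, hb⟩ := freq_const (hPfin n) (fun m => trunc n (c m)) n hf
    obtain ⟨m₀, hm₀, hnm₀, hbm₀⟩ := hb n
    refine ⟨b, hbm₀ ▸ hf m₀ hnm₀, ?_⟩
    intro m hm
    obtain ⟨m', hmm', hnm', hbm'⟩ := hb m
    refine ⟨trunc m (c m'),
      htrunc_mem m (c m') (hc m').1 (fun i hi => (hc m').2.2 i (le_trans hi hmm')), ?_⟩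
    rw [htrunc_comp n m hm, hbm']
  have hQext : ∀ n, ∀ l ∈ Q n, ∃ l' ∈ Q (n + 1), trunc n l' = l := by
    intro n l hl
    choose w hwP hwt using hl.2
    set f : ℕ → List ℕ := fun m =>
      if h : n + 1 ≤ m then trunc (n + 1) (w m (le_of_lt h)) else [] with hfdef
    have hf : ∀ m, n + 1 ≤ m → f m ∈ P (n + 1) := by
      intro m hm
      simp only [hfdef, dif_pos hm]
      exact htrunc_mem (n + 1) _ (hwP m (le_of_lt hm)).1
        (fun i hi => (hwP m (le_of_lt hm)).2.2 i (le_trans hi hm))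
    obtain ⟨b, hb⟩ := freq_const (hPfin (n + 1)) f (n + 1) hf
    obtain ⟨m₀, hm₀, hnm₀, hbm₀⟩ := hb (n + 1)
    have hbP : b ∈ P (n + 1) := hbm₀ ▸ hf m₀ hnm₀
    have hbt : trunc n b = l := by
      rw [← hbm₀]
      simp only [hfdef, dif_pos hnm₀]
      rw [htrunc_comp n (n + 1) (Nat.le_succ n), hwt m₀ (le_of_lt hnm₀)]
    refine ⟨b, ⟨hbP, ?_⟩, hbt⟩
    intro m hm
    obtain ⟨m', hmm', hnm', hbm'⟩ := hb m
    refine ⟨trunc m (w m' (le_of_lt (lt_of_lt_of_le hnm' (le_refl m')))), ?_, ?_⟩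
    · exact htrunc_mem m _ (hwP m' _).1
        (fun i hi => (hwP m' _).2.2 i (le_trans hi hmm'))
    · rw [htrunc_comp (n + 1) m hm, ← hbm']
      simp only [hfdef, dif_pos (le_trans hm hmm')]
  -- build the branch
  have step : ∀ n (l : {l // l ∈ Q n}), {l' // l' ∈ Q (n + 1) ∧ trunc n l' = l.1} := by
    intro n l
    exact ⟨(hQext n l.1 l.2).choose, (hQext n l.1 l.2).choose_spec⟩
  let L : ∀ n : ℕ, {l // l ∈ Q n} := fun n =>
    Nat.rec ⟨(hQne 0).some, (hQne 0).some_mem⟩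
      (fun k ih => ⟨(step k ih).1, (step k ih).2.1⟩) n
  have hLQ : ∀ n, (L n).1 ∈ Q n := fun n => (L n).2
  have hLstep : ∀ n, trunc n (L (n + 1)).1 = (L n).1 := fun n => (step n (L n)).2.2
  have hpre1 : ∀ n, (L n).1 <+: (L (n + 1)).1 := by
    intro n
    rw [← hLstep n]
    exact List.takeWhile_prefix _
  have hpre : ∀ n m, n ≤ m → (L n).1 <+: (L m).1 := by
    intro n m hnm
    induction m, hnm using Nat.le_induction with
    | base => exact List.prefix_refl _
    | succ m hm ih => exact ih.trans (hpre1 m)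
  have hlen : ∀ n, n < (L n).1.length := by
    intro n
    have hP := (hLQ n).1
    have hsub : Finset.image j (Finset.range (n + 1)) ⊆ (L n).1.toFinset := by
      intro x hx
      obtain ⟨i, hi, rfl⟩ := Finset.mem_image.1 hx
      exact List.mem_toFinset.2 (hP.2.2 i (Nat.lt_succ_iff.1 (Finset.mem_range.1 hi)))
    have h1 : n + 1 ≤ (L n).1.toFinset.card := by
      have := Finset.card_le_card hsub
      rwa [Finset.card_image_of_injective _ hj.injective, Finset.card_range] at this
    exact lt_of_lt_of_le (Nat.lt_of_lt_of_le (Nat.lt_succ_self n) h1)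
      (List.toFinset_card_le _)
  -- the infinite branch
  set x : ℕ → ℕ := fun k => (L k).1.getD k 0 with hxdef
  apply hwf
  refine ⟨x, fun n => ?_⟩
  have hofn : (List.ofFn fun i : Fin n => x i) = (L n).1.take n := by
    apply List.ext_getElem
    · simp [Nat.min_eq_left (le_of_lt (hlen n))]
    · intro i h1 h2
      simp only [List.getElem_ofFn, List.getElem_take]
      have hi : i < n := by simpa using h1
      have hil : i < (L i).1.length := lt_of_le_of_lt (Nat.le_refl i) (hlen i)
      rw [hxdef]
      simp only
      rw [List.getD_eq_getElem _ _ hil]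
      exact (hpre i n (le_of_lt hi)).getElem hil
  rw [hofn]
  exact hclosed (L n).1 (hLQ n).1.1 _ (List.take_prefix _ _)
end

section
/- Let 𝒰 be an ultrafilter on ℕ and T ⊆ ℕ^{≤k} a 𝒰-large tree of height k, where 𝒰 is Ramsey. Then T contains a 𝒰-homogeneous subtree: there exists H ∈ 𝒰 such that every k-tuple (n₁, ..., n_k) with all entries in H and n₁ < ⋯ < n_k belongs to T. -/
/-- A tree `T ⊆ ℕ^{≤k}` of height `k` is `𝒰`-large if it contains the empty sequence, all
its nodes have length at most `k`, and each node of length `< k` has a `𝒰`-large set of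
immediate successors. -/
def ULargeTree (U : Ultrafilter ℕ) (k : ℕ) (T : Set (List ℕ)) : Prop :=
  [] ∈ T ∧ (∀ l ∈ T, l.length ≤ k) ∧ (∀ l ∈ T, ∀ l' : List ℕ, l' <+: l → l' ∈ T) ∧
  ∀ l ∈ T, l.length < k → {n : ℕ | l ++ [n] ∈ T} ∈ U

lemma le_foldr_max_of_mem : ∀ (l : List ℕ), ∀ m ∈ l, m ≤ l.foldr max 0 := by
  intro l
  induction l with
  | nil => simp
  | cons a l ih =>
    intro m hm
    rcases List.mem_cons.mp hm with rfl | hm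
    · exact le_max_left _ _
    · exact le_trans (ih m hm) (le_max_right _ _)

/-- If `𝒰` is a Ramsey ultrafilter and `T ⊆ ℕ^{≤k}` is a `𝒰`-large tree of height `k`,
then `T` contains a `𝒰`-homogeneous subtree: there is `H ∈ 𝒰` such that every strictly
increasing `k`-tuple with all entries in `H` belongs to `T`. -/
theorem uLargeTree_contains_homogeneous_tree
    (U : Ultrafilter ℕ) (hU : IsRamseyUltrafilter U) (k : ℕ)
    (T : Set (List ℕ)) (hT : ULargeTree U k T) :
    ∃ H ∈ U, ∀ l : List ℕ, l.length = k → l.Chain' (· < ·) →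
      (∀ n ∈ l, n ∈ H) → l ∈ T := by
  classical
  obtain ⟨hTnil, hlen, hpref, hsucc⟩ := hT
  set f : Finset ℕ → Fin 2 := fun s => if s.sort (· ≤ ·) ∈ T then 0 else 1 with hf
  obtain ⟨H, hH, hhom⟩ := hU.2 k 2 f
  have hinf : ∀ A ∈ U, A.Infinite := by
    intro A hA
    by_contra h
    exact hU.1 A (Set.not_infinite.mp h) hA
  -- build a witness strictly increasing branch of T inside H
  have key : ∀ j, j ≤ k → ∃ l : List ℕ, l ∈ T ∧ l.length = j ∧ l.Chain' (· < ·) ∧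
      ∀ n ∈ l, n ∈ H := by
    intro j
    induction j with
    | zero => exact fun _ => ⟨[], hTnil, rfl, List.isChain_nil, by simp⟩
    | succ j ih =>
      intro hj
      obtain ⟨l, hlT, hllen, hlch, hlH⟩ := ih (Nat.le_of_succ_le hj)
      have hlk : l.length < k := by omega
      have hA : ({n : ℕ | l ++ [n] ∈ T} ∩ H : Set ℕ) ∈ U :=
        U.inter_mem (hsucc l hlT hlk) hH
      obtain ⟨b, hbA, hb⟩ := (hinf _ hA).exists_gt (l.foldr max 0)
      refine ⟨l ++ [b], hbA.1, by simp [hllen], ?_, ?_⟩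
      · refine List.IsChain.append hlch (List.isChain_singleton b) ?_
        intro x hx y hy
        have hxl : x ∈ l := List.mem_of_mem_getLast? hx
        have : y = b := by simpa using hy.symm
        subst this
        exact lt_of_le_of_lt (le_foldr_max_of_mem l x hxl) hb
      · intro n hn
        rcases List.mem_append.mp hn with hn | hn
        · exact hlH n hn
        · simp at hn; subst hn; exact hbA.2
  obtain ⟨l₀, hl₀T, hl₀len, hl₀ch, hl₀H⟩ := key k le_rfl
  refine ⟨H, hH, ?_⟩
  intro l hl hch hlH
  have nodupOf : ∀ m : List ℕ, m.Chain' (· < ·) → m.Nodup := fun m hm =>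
    ((List.isChain_iff_pairwise.mp hm).imp ne_of_lt)
  have sortOf : ∀ m : List ℕ, m.Chain' (· < ·) →
      Finset.sort m.toFinset (· ≤ ·) = m := fun m hm =>
    (List.toFinset_sort (· ≤ ·) (nodupOf m hm)).mpr
      ((List.isChain_iff_pairwise.mp hm).imp le_of_lt)
  have cardOf : ∀ m : List ℕ, m.Chain' (· < ·) → m.toFinset.card = m.length := fun m hm =>
    List.toFinset_card_of_nodup (nodupOf m hm)
  have hsub : ∀ m : List ℕ, (∀ n ∈ m, n ∈ H) → (m.toFinset : Set ℕ) ⊆ H := by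
    intro m hm x hx
    simp only [List.coe_toFinset, Set.mem_setOf_eq] at hx
    exact hm x hx
  have heq : f l.toFinset = f l₀.toFinset :=
    hhom _ _ (by rw [cardOf l hch, hl]) (by rw [cardOf l₀ hl₀ch, hl₀len])
      (hsub l hlH) (hsub l₀ hl₀H)
  have h0 : f l₀.toFinset = 0 := by
    rw [hf]
    simp only [sortOf l₀ hl₀ch]
    exact if_pos hl₀T
  rw [h0, hf] at heq
  simp only [sortOf l hch] at heq
  by_contra hlT
  rw [if_neg hlT] at heq
  exact absurd heq (by decide)
end

section
/- Let (eᵢ) be a normalized conditional 1-spreading basic sequence in a Banach space whose summing functional S has norm 1. Then for every C ≥ 1 there exist k ∈ ℕ and positive scalars c₁, ..., c_k such that ‖Σ_{i=1}^{k} cᵢ(e_{nᵢ} − e_{mᵢ})‖ ≤ 1 for all n₁ < m₁ < n₂ < m₂ < ⋯ < n_k < m_k, while ‖Σ_{i=1}^{k} cᵢ e_{nᵢ}‖ ≥ Σ_{i=1}^{k} cᵢ ≥ C for all n₁ < ⋯ < n_k. -/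
open Finset

section
variable {X : Type*} [NormedAddCommGroup X] [NormedSpace ℝ X]

/-- `(e i)` is 1-spreading: the norm of finite linear combinations is invariant under
spreading the indices along any strictly increasing sequence. -/
def OneSpreading (e : ℕ → X) : Prop :=
  ∀ (k : ℕ) (a : ℕ → ℝ) (n : ℕ → ℕ), StrictMono n →
    ‖∑ i ∈ range k, a i • e (n i)‖ = ‖∑ i ∈ range k, a i • e i‖

/-- `(e i)` is unconditional (with some constant): multiplying coefficients by scalars of
modulus at most 1 changes the norm by at most a fixed factor. -/
def UnconditionalSeq (e : ℕ → X) : Prop :=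
  ∃ C : ℝ, ∀ (k : ℕ) (a σ : ℕ → ℝ), (∀ i, |σ i| ≤ 1) →
    ‖∑ i ∈ range k, (σ i * a i) • e i‖ ≤ C * ‖∑ i ∈ range k, a i • e i‖

end

set_option linter.unusedSectionVars false
set_option linter.unusedVariables false
set_option maxHeartbeats 1000000

section aux
variable {X : Type*} [NormedAddCommGroup X] [NormedSpace ℝ X]

lemma sum_double' (f : ℕ → X) (k : ℕ) :
    ∑ j ∈ range (2*k), f j = ∑ i ∈ range k, (f (2*i) + f (2*i+1)) := by
  induction k with
  | zero => simp
  | succ k ih =>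
    have h2 : 2*(k+1) = (2*k)+1+1 := by ring
    rw [h2, sum_range_succ, sum_range_succ, ih, sum_range_succ, add_assoc]

lemma pair_sum (b : ℕ → ℝ) (w : ℕ → X) (k : ℕ) :
    ∑ j ∈ range (2*k), (if j % 2 = 0 then b (j/2) else -b (j/2)) • w j
      = ∑ i ∈ range k, b i • (w (2*i) - w (2*i+1)) := by
  rw [sum_double']
  refine sum_congr rfl fun i _ => ?_
  have h2 : (2*i) / 2 = i := by omega
  have h4 : (2*i+1) / 2 = i := by omega
  rw [if_pos (by omega : (2*i) % 2 = 0), h2,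
    if_neg (by omega : ¬ (2*i+1) % 2 = 0), h4, smul_sub, neg_smul]
  abel

lemma pair_norm (e : ℕ → X) (hspread : OneSpreading e) (k : ℕ) (b : ℕ → ℝ)
    (u v : ℕ → ℕ) (h1 : ∀ i < k, u i < v i) (h2 : ∀ i, i + 1 < k → v i < u (i+1)) :
    ‖∑ i ∈ range k, b i • (e (u i) - e (v i))‖ =
    ‖∑ i ∈ range k, b i • (e (2*i) - e (2*i+1))‖ := by
  set p : ℕ → ℕ := fun j => if j < 2*k then (if j % 2 = 0 then u (j/2) else v (j/2))
    else v (k-1) + 1 + j with hp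
  have hpmono : StrictMono p := by
    apply strictMono_nat_of_lt_succ
    intro j
    rcases lt_trichotomy (j+1) (2*k) with hj | hj | hj
    · have hj' : j < 2*k := by omega
      rcases Nat.even_or_odd j with ⟨i, hi⟩ | ⟨i, hi⟩
      · have e1 : j % 2 = 0 := by omega
        have e2 : (j+1) % 2 = 1 := by omega
        simp only [hp, if_pos hj', if_pos hj, if_pos e1, if_neg (by omega : ¬ (j+1) % 2 = 0)]
        have : (j+1)/2 = j/2 := by omega
        rw [this]
        exact h1 _ (by omega)
      · have e1 : ¬ j % 2 = 0 := by omega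
        have e2 : (j+1) % 2 = 0 := by omega
        simp only [hp, if_pos hj', if_pos hj, if_neg e1, if_pos e2]
        have : (j+1)/2 = j/2 + 1 := by omega
        rw [this]
        exact h2 _ (by omega)
    · -- j+1 = 2k, so j = 2k-1 is odd, k ≥ 1
      have hk : 1 ≤ k := by omega
      have hj' : j < 2*k := by omega
      have e1 : ¬ j % 2 = 0 := by omega
      simp only [hp, if_pos hj', if_neg (by omega : ¬ j+1 < 2*k), if_neg e1]
      have : j / 2 = k - 1 := by omega
      rw [this]
      omega
    · simp only [hp, if_neg (by omega : ¬ j < 2*k), if_neg (by omega : ¬ j+1 < 2*k)]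
      omega
  set a : ℕ → ℝ := fun j => if j % 2 = 0 then b (j/2) else -b (j/2) with ha
  have key := hspread (2*k) a p hpmono
  have l1 : ∑ j ∈ range (2*k), a j • e (p j) = ∑ i ∈ range k, b i • (e (u i) - e (v i)) := by
    rw [ha]
    rw [pair_sum b (fun j => e (p j)) k]
    refine sum_congr rfl fun i hi => ?_
    simp only [mem_range] at hi
    have q1 : p (2*i) = u i := by
      simp only [hp, if_pos (by omega : 2*i < 2*k), if_pos (by omega : (2*i) % 2 = 0)]
      congr 1; omega
    have q2 : p (2*i+1) = v i := by
      simp only [hp, if_pos (by omega : 2*i+1 < 2*k), if_neg (by omega : ¬ (2*i+1) % 2 = 0)]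
      congr 1; omega
    rw [q1, q2]
  have l2 : ∑ j ∈ range (2*k), a j • e j = ∑ i ∈ range k, b i • (e (2*i) - e (2*i+1)) :=
    pair_sum b e k
  rw [l1, l2] at key
  exact key
end aux

section aux2
variable {X : Type*} [NormedAddCommGroup X] [NormedSpace ℝ X]

lemma suppress (e : ℕ → X) (hnorm : ∀ i, ‖e i‖ = 1) (hspread : OneSpreading e)
    (k : ℕ) (b σ : ℕ → ℝ) (hσ : ∀ i, σ i = 0 ∨ σ i = 1) :
    ‖∑ i ∈ range k, (σ i * b i) • (e (2*i) - e (2*i+1))‖ ≤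
    ‖∑ i ∈ range k, b i • (e (2*i) - e (2*i+1))‖ := by
  have hB : (0:ℝ) ≤ ∑ i ∈ range k, |b i| := sum_nonneg fun i _ => abs_nonneg _
  apply le_of_forall_pos_le_add
  intro ε hε
  obtain ⟨T, hT⟩ := exists_nat_gt ((2 * ∑ i ∈ range k, |b i|) / ε)
  have hT1 : 1 ≤ T := by
    have : (0:ℝ) ≤ (2 * ∑ i ∈ range k, |b i|) / ε := by positivity
    have := this.trans_lt hT
    exact_mod_cast Nat.one_le_iff_ne_zero.mpr (by intro h; rw [h] at this; simp at this)
  set L : ℕ := 2*T+2 with hL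
  -- placements for each t < T
  set u : ℕ → ℕ → ℕ := fun t i => if σ i = 1 then i*L else i*L + t with hu
  have hinter : ∀ t, t < T → (∀ i < k, u t i < u t i + 1) ∧
      (∀ i, i + 1 < k → u t i + 1 < u t (i+1)) := by
    intro t ht
    constructor
    · intro i _; omega
    · intro i _
      have w1 : u t i ≤ i*L + t := by
        simp only [hu]; split <;> omega
      have w2 : (i+1)*L ≤ u t (i+1) := by
        simp only [hu]; split <;> omega
      have : i*L + t + 1 < (i+1)*L := by
        have : (i+1)*L = i*L + L := by ring
        omega
      omega
  have hvt : ∀ t, t < T →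
      ‖∑ i ∈ range k, b i • (e (u t i) - e (u t i + 1))‖ =
      ‖∑ i ∈ range k, b i • (e (2*i) - e (2*i+1))‖ := by
    intro t ht
    exact pair_norm e hspread k b (u t) (fun i => u t i + 1)
      (hinter t ht).1 (hinter t ht).2
  set x := ∑ i ∈ range k, b i • (e (2*i) - e (2*i+1)) with hx
  set y := ∑ i ∈ range k, (σ i * b i) • (e (i*L) - e (i*L+1)) with hy
  set z := ∑ i ∈ range k, ((1 - σ i) * b i) • (e (i*L) - e (i*L+T)) with hz
  -- key identity
  have hid : ∑ t ∈ range T, ∑ i ∈ range k, b i • (e (u t i) - e (u t i + 1))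
      = (T:ℝ) • y + z := by
    rw [Finset.sum_comm, hy, hz, smul_sum, ← sum_add_distrib]
    refine sum_congr rfl fun i _ => ?_
    rcases hσ i with h0 | h1
    · -- suppressed: telescoping
      have : ∀ t ∈ range T, b i • (e (u t i) - e (u t i + 1))
          = b i • (e (i*L + t) - e (i*L + t + 1)) := by
        intro t _
        simp only [hu, if_neg (by rw [h0]; norm_num : ¬ σ i = 1)]
      rw [sum_congr rfl this, ← smul_sum]
      have tele : ∑ t ∈ range T, (e (i*L + t) - e (i*L + t + 1))
          = e (i*L) - e (i*L + T) := by
        have := Finset.sum_range_sub' (f := fun t => e (i*L + t)) T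
        simpa [add_assoc] using this
      rw [tele, h0]
      simp
    · -- kept: constant
      have : ∀ t ∈ range T, b i • (e (u t i) - e (u t i + 1))
          = b i • (e (i*L) - e (i*L + 1)) := by
        intro t _
        simp only [hu, if_pos h1]
      rw [sum_congr rfl this, sum_const, card_range, h1, ← Nat.cast_smul_eq_nsmul ℝ]
      module
  have hTnorm : ‖(T:ℝ) • y‖ ≤ (T:ℝ) * ‖x‖ + 2 * ∑ i ∈ range k, |b i| := by
    have h1 : (T:ℝ) • y = (∑ t ∈ range T, ∑ i ∈ range k, b i • (e (u t i) - e (u t i + 1))) - z := by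
      rw [hid]; abel
    rw [h1]
    have h2 : ‖∑ t ∈ range T, ∑ i ∈ range k, b i • (e (u t i) - e (u t i + 1))‖
        ≤ (T:ℝ) * ‖x‖ := by
      calc _ ≤ ∑ t ∈ range T, ‖∑ i ∈ range k, b i • (e (u t i) - e (u t i + 1))‖ :=
            norm_sum_le _ _
        _ = ∑ t ∈ range T, ‖x‖ := by
            refine sum_congr rfl fun t ht => ?_
            rw [mem_range] at ht
            exact hvt t ht
        _ = (T:ℝ) * ‖x‖ := by rw [sum_const, card_range, nsmul_eq_mul]
    have h3 : ‖z‖ ≤ 2 * ∑ i ∈ range k, |b i| := by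
      calc ‖z‖ ≤ ∑ i ∈ range k, ‖((1 - σ i) * b i) • (e (i*L) - e (i*L+T))‖ :=
            norm_sum_le _ _
        _ ≤ ∑ i ∈ range k, 2 * |b i| := by
            refine sum_le_sum fun i _ => ?_
            rw [norm_smul, Real.norm_eq_abs, abs_mul]
            have e1 : |1 - σ i| ≤ 1 := by rcases hσ i with h | h <;> rw [h] <;> norm_num
            have e2 : ‖e (i*L) - e (i*L+T)‖ ≤ 2 := by
              calc _ ≤ ‖e (i*L)‖ + ‖e (i*L+T)‖ := norm_sub_le _ _
                _ = 2 := by rw [hnorm, hnorm]; norm_num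
            calc |1 - σ i| * |b i| * ‖e (i*L) - e (i*L+T)‖
                ≤ 1 * |b i| * 2 := by
                  apply mul_le_mul (mul_le_mul_of_nonneg_right e1 (abs_nonneg _)) e2
                    (norm_nonneg _)
                  positivity
              _ = 2 * |b i| := by ring
        _ = 2 * ∑ i ∈ range k, |b i| := by rw [mul_sum]
    calc ‖_ - z‖ ≤ ‖∑ t ∈ range T, ∑ i ∈ range k, b i • (e (u t i) - e (u t i + 1))‖ + ‖z‖ :=
          norm_sub_le _ _
      _ ≤ (T:ℝ) * ‖x‖ + 2 * ∑ i ∈ range k, |b i| := add_le_add h2 h3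
  have hynorm : ‖y‖ ≤ ‖x‖ + ε := by
    have hTpos : (0:ℝ) < T := by exact_mod_cast hT1
    have : (T:ℝ) * ‖y‖ ≤ (T:ℝ) * ‖x‖ + 2 * ∑ i ∈ range k, |b i| := by
      have h5 := hTnorm
      rw [norm_smul, Real.norm_eq_abs, abs_of_nonneg hTpos.le] at h5
      exact h5
    have h4 : 2 * ∑ i ∈ range k, |b i| < ε * T := by
      rw [div_lt_iff₀ hε] at hT
      linarith [hT]
    nlinarith [norm_nonneg y]
  -- finally y has same norm as the goal LHS
  have : ‖∑ i ∈ range k, (σ i * b i) • (e (2*i) - e (2*i+1))‖ = ‖y‖ := by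
    rw [hy]
    rw [pair_norm e hspread k (fun i => σ i * b i) (fun i => i*L) (fun i => i*L+1)
      (fun i _ => by show i*L < i*L+1; omega) (fun i _ => by
        show i*L+1 < (i+1)*L
        have : (i+1)*L = i*L + L := by ring
        omega)]
  rw [this]
  exact hynorm

end aux2

section main
variable {X : Type*} [NormedAddCommGroup X] [NormedSpace ℝ X]

lemma key_exists (e : ℕ → X) (hnorm : ∀ i, ‖e i‖ = 1) (hspread : OneSpreading e)
    (hcond : ¬ UnconditionalSeq e) (C : ℝ) (hC : 1 ≤ C) :
    ∃ k : ℕ, ∃ c : ℕ → ℝ, (∀ i < k, 0 < c i) ∧ C ≤ ∑ i ∈ range k, c i ∧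
      ‖∑ i ∈ range k, c i • (e (2*i) - e (2*i+1))‖ ≤ 1 := by
  by_contra hK
  push_neg at hK
  have hC0 : (0:ℝ) < C := by linarith
  -- ℓ₁ lower bound on the positive cone
  have hscale : ∀ (k : ℕ) (c : ℕ → ℝ), (∀ i < k, 0 < c i) →
      ∑ i ∈ range k, c i ≤ C * ‖∑ i ∈ range k, c i • (e (2*i) - e (2*i+1))‖ := by
    intro k c hc
    rcases Nat.eq_zero_or_pos k with hk | hk
    · subst hk; simp
    have hs : (0:ℝ) < ∑ i ∈ range k, c i :=
      sum_pos (fun i hi => hc i (mem_range.mp hi)) (nonempty_range_iff.mpr (by omega))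
    set s := ∑ i ∈ range k, c i with hsdef
    have h1 := hK k (fun i => (C/s) * c i)
      (fun i hi => mul_pos (div_pos hC0 hs) (hc i hi))
      (by rw [← mul_sum, ← hsdef, div_mul_cancel₀ _ hs.ne'])
    have h2 : ∑ i ∈ range k, ((C/s) * c i) • (e (2*i) - e (2*i+1))
        = (C/s) • ∑ i ∈ range k, c i • (e (2*i) - e (2*i+1)) := by
      rw [smul_sum]
      exact sum_congr rfl fun i _ => (smul_smul _ _ _).symm
    rw [h2, norm_smul, Real.norm_eq_abs, abs_of_pos (div_pos hC0 hs),
      div_mul_eq_mul_div, lt_div_iff₀ hs, one_mul] at h1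
    exact h1.le
  -- extend to nonnegative coefficients
  have hnn : ∀ (k : ℕ) (c : ℕ → ℝ), (∀ i < k, 0 ≤ c i) →
      ∑ i ∈ range k, c i ≤ C * ‖∑ i ∈ range k, c i • (e (2*i) - e (2*i+1))‖ := by
    intro k c hc
    apply le_of_forall_pos_le_add
    intro η hη
    set ε := η / (2*C*(k:ℝ) + 1) with hεdef
    have hεpos : 0 < ε := div_pos hη (by positivity)
    have h1 := hscale k (fun i => c i + ε) (fun i hi => by
      show 0 < c i + ε
      have := hc i hi; linarith)
    have h2 : ∑ i ∈ range k, (c i + ε) = (∑ i ∈ range k, c i) + (k:ℝ) * ε := by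
      rw [sum_add_distrib, sum_const, card_range, nsmul_eq_mul]
    have h3 : ‖∑ i ∈ range k, (c i + ε) • (e (2*i) - e (2*i+1))‖
        ≤ ‖∑ i ∈ range k, c i • (e (2*i) - e (2*i+1))‖ + 2 * (k:ℝ) * ε := by
      have hd : ∑ i ∈ range k, (c i + ε) • (e (2*i) - e (2*i+1))
          = (∑ i ∈ range k, c i • (e (2*i) - e (2*i+1)))
            + ∑ i ∈ range k, ε • (e (2*i) - e (2*i+1)) := by
        rw [← sum_add_distrib]
        exact sum_congr rfl fun i _ => add_smul _ _ _
      rw [hd]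
      have h4 : ‖∑ i ∈ range k, ε • (e (2*i) - e (2*i+1))‖ ≤ 2 * (k:ℝ) * ε := by
        calc _ ≤ ∑ i ∈ range k, ‖ε • (e (2*i) - e (2*i+1))‖ := norm_sum_le _ _
          _ ≤ ∑ i ∈ range k, 2 * ε := by
              refine sum_le_sum fun i _ => ?_
              rw [norm_smul, Real.norm_eq_abs, abs_of_pos hεpos]
              have : ‖e (2*i) - e (2*i+1)‖ ≤ 2 := by
                calc _ ≤ ‖e (2*i)‖ + ‖e (2*i+1)‖ := norm_sub_le _ _
                  _ = 2 := by rw [hnorm, hnorm]; norm_num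
              nlinarith
          _ = 2 * (k:ℝ) * ε := by rw [sum_const, card_range, nsmul_eq_mul]; ring
      calc _ ≤ ‖∑ i ∈ range k, c i • (e (2*i) - e (2*i+1))‖
            + ‖∑ i ∈ range k, ε • (e (2*i) - e (2*i+1))‖ := norm_add_le _ _
        _ ≤ _ := by linarith
    have h5 : 2*C*(k:ℝ)*ε ≤ η := by
      rw [hεdef]
      rw [div_eq_mul_inv, ← mul_assoc]
      have hpos : (0:ℝ) < 2*C*(k:ℝ) + 1 := by positivity
      rw [mul_comm (2*C*(k:ℝ)) η, mul_assoc]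
      have : (2*C*(k:ℝ)) * (2*C*(k:ℝ)+1)⁻¹ ≤ 1 := by
        rw [mul_inv_le_iff₀ hpos]; linarith
      nlinarith
    have hkε : 0 ≤ (k:ℝ) * ε := by positivity
    calc ∑ i ∈ range k, c i ≤ ∑ i ∈ range k, (c i + ε) := by rw [h2]; linarith
      _ ≤ C * ‖∑ i ∈ range k, (c i + ε) • (e (2*i) - e (2*i+1))‖ := h1
      _ ≤ C * (‖∑ i ∈ range k, c i • (e (2*i) - e (2*i+1))‖ + 2 * (k:ℝ) * ε) := by
          exact mul_le_mul_of_nonneg_left h3 hC0.le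
      _ ≤ C * ‖∑ i ∈ range k, c i • (e (2*i) - e (2*i+1))‖ + η := by
          have : C * (2*(k:ℝ)*ε) = 2*C*(k:ℝ)*ε := by ring
          nlinarith [h5]
  -- ℓ₁ lower bound with absolute values
  have habs : ∀ (k : ℕ) (b : ℕ → ℝ),
      ∑ i ∈ range k, |b i| ≤ 2 * C * ‖∑ i ∈ range k, b i • (e (2*i) - e (2*i+1))‖ := by
    intro k b
    set σp : ℕ → ℝ := fun i => if 0 ≤ b i then 1 else 0 with hσp
    set σm : ℕ → ℝ := fun i => if 0 ≤ b i then 0 else 1 with hσm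
    have hσp01 : ∀ i, σp i = 0 ∨ σp i = 1 := fun i => by
      simp only [hσp]; split <;> simp
    have hσm01 : ∀ i, σm i = 0 ∨ σm i = 1 := fun i => by
      simp only [hσm]; split <;> simp
    have hp := hnn k (fun i => σp i * b i) (fun i _ => by
      show 0 ≤ σp i * b i
      simp only [hσp]
      by_cases h : 0 ≤ b i
      · rw [if_pos h]; linarith
      · rw [if_neg h]; simp)
    have hm := hnn k (fun i => σm i * (- b i)) (fun i _ => by
      show 0 ≤ σm i * (- b i)
      simp only [hσm]
      by_cases h : 0 ≤ b i
      · rw [if_pos h]; simp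
      · rw [if_neg h]; push_neg at h; nlinarith)
    have hps := suppress e hnorm hspread k b σp hσp01
    have hms := suppress e hnorm hspread k b σm hσm01
    have hmeq : ∑ i ∈ range k, (σm i * (- b i)) • (e (2*i) - e (2*i+1))
        = - ∑ i ∈ range k, (σm i * b i) • (e (2*i) - e (2*i+1)) := by
      rw [← sum_neg_distrib]
      exact sum_congr rfl fun i _ => by rw [mul_neg, neg_smul]
    rw [hmeq, norm_neg] at hm
    have habs_eq : ∀ i, |b i| = σp i * b i + σm i * (- b i) := by
      intro i
      simp only [hσp, hσm]
      rcases le_or_gt 0 (b i) with h | h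
      · rw [if_pos h, if_pos h, abs_of_nonneg h]; ring
      · rw [if_neg (not_le.mpr h), if_neg (not_le.mpr h), abs_of_neg h]; ring
    calc ∑ i ∈ range k, |b i|
        = (∑ i ∈ range k, σp i * b i) + ∑ i ∈ range k, σm i * (- b i) := by
          rw [← sum_add_distrib]; exact sum_congr rfl fun i _ => habs_eq i
      _ ≤ C * ‖∑ i ∈ range k, (σp i * b i) • (e (2*i) - e (2*i+1))‖
          + C * ‖∑ i ∈ range k, (σm i * b i) • (e (2*i) - e (2*i+1))‖ := add_le_add hp hm
      _ ≤ C * ‖∑ i ∈ range k, b i • (e (2*i) - e (2*i+1))‖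
          + C * ‖∑ i ∈ range k, b i • (e (2*i) - e (2*i+1))‖ :=
          add_le_add (mul_le_mul_of_nonneg_left hps hC0.le)
            (mul_le_mul_of_nonneg_left hms hC0.le)
      _ = 2 * C * ‖∑ i ∈ range k, b i • (e (2*i) - e (2*i+1))‖ := by ring
  -- conclude unconditionality
  apply hcond
  refine ⟨4 * C, fun k a σ hσ => ?_⟩
  have step1 : ‖∑ i ∈ range k, (σ i * a i) • e i‖ ≤ ∑ i ∈ range k, |a i| := by
    calc _ ≤ ∑ i ∈ range k, ‖(σ i * a i) • e i‖ := norm_sum_le _ _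
      _ ≤ ∑ i ∈ range k, |a i| := by
          refine sum_le_sum fun i _ => ?_
          rw [norm_smul, Real.norm_eq_abs, hnorm, mul_one, abs_mul]
          calc |σ i| * |a i| ≤ 1 * |a i| :=
                mul_le_mul_of_nonneg_right (hσ i) (abs_nonneg _)
            _ = |a i| := one_mul _
  have hsplit : ∑ i ∈ range k, a i • (e (2*i) - e (2*i+1))
      = (∑ i ∈ range k, a i • e (2*i)) - ∑ i ∈ range k, a i • e (2*i+1) := by
    rw [← sum_sub_distrib]
    exact sum_congr rfl fun i _ => smul_sub _ _ _
  have hm1 : ‖∑ i ∈ range k, a i • e (2*i)‖ = ‖∑ i ∈ range k, a i • e i‖ :=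
    hspread k a (fun i => 2*i) (fun i j h => by show 2*i < 2*j; omega)
  have hm2 : ‖∑ i ∈ range k, a i • e (2*i+1)‖ = ‖∑ i ∈ range k, a i • e i‖ :=
    hspread k a (fun i => 2*i+1) (fun i j h => by show 2*i+1 < 2*j+1; omega)
  have step2 : ‖∑ i ∈ range k, a i • (e (2*i) - e (2*i+1))‖
      ≤ 2 * ‖∑ i ∈ range k, a i • e i‖ := by
    rw [hsplit]
    calc _ ≤ ‖∑ i ∈ range k, a i • e (2*i)‖ + ‖∑ i ∈ range k, a i • e (2*i+1)‖ :=
          norm_sub_le _ _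
      _ = 2 * ‖∑ i ∈ range k, a i • e i‖ := by rw [hm1, hm2]; ring
  calc ‖∑ i ∈ range k, (σ i * a i) • e i‖ ≤ ∑ i ∈ range k, |a i| := step1
    _ ≤ 2 * C * ‖∑ i ∈ range k, a i • (e (2*i) - e (2*i+1))‖ := habs k a
    _ ≤ 2 * C * (2 * ‖∑ i ∈ range k, a i • e i‖) :=
        mul_le_mul_of_nonneg_left step2 (by positivity)
    _ = 4 * C * ‖∑ i ∈ range k, a i • e i‖ := by ring

end main

/-- For a normalized conditional 1-spreading basic sequence `(eᵢ)` whose summing functional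
`S` has norm 1 (and `S eᵢ = 1`): for every `C ≥ 1` there are `k` and positive scalars
`c₁,…,c_k` such that `‖Σ cᵢ(e_{nᵢ} − e_{mᵢ})‖ ≤ 1` for all interlacing
`n₁ < m₁ < ⋯ < n_k < m_k`, while `‖Σ cᵢ e_{nᵢ}‖ ≥ Σ cᵢ ≥ C` for all `n₁ < ⋯ < n_k`. -/
theorem conditional_spreading_interlacing
    {X : Type*} [NormedAddCommGroup X] [NormedSpace ℝ X]
    (e : ℕ → X) (hnorm : ∀ i, ‖e i‖ = 1)
    (hbasic : ∃ Cb : ℝ, 1 ≤ Cb ∧ ∀ (m k : ℕ) (a : ℕ → ℝ), m ≤ k →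
      ‖∑ i ∈ Finset.range m, a i • e i‖ ≤ Cb * ‖∑ i ∈ Finset.range k, a i • e i‖)
    (hspread : OneSpreading e) (hcond : ¬ UnconditionalSeq e)
    (S : X →L[ℝ] ℝ) (hSnorm : ‖S‖ = 1) (hSe : ∀ i, S (e i) = 1) :
    ∀ C : ℝ, 1 ≤ C → ∃ k : ℕ, ∃ c : ℕ → ℝ, (∀ i < k, 0 < c i) ∧
      (∀ n m : ℕ → ℕ, (∀ i < k, n i < m i) → (∀ i, i + 1 < k → m i < n (i + 1)) →
        ‖∑ i ∈ Finset.range k, c i • (e (n i) - e (m i))‖ ≤ 1) ∧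
      C ≤ ∑ i ∈ Finset.range k, c i ∧
      (∀ n : ℕ → ℕ, StrictMono n →
        ∑ i ∈ Finset.range k, c i ≤ ‖∑ i ∈ Finset.range k, c i • e (n i)‖) := by
  intro C hC
  obtain ⟨k, c, hcpos, hsum, hle⟩ := key_exists e hnorm hspread hcond C hC
  refine ⟨k, c, hcpos, ?_, hsum, ?_⟩
  · intro n m h1 h2
    rw [pair_norm e hspread k c n m h1 h2]
    exact hle
  · intro n hn
    have hS : S (∑ i ∈ range k, c i • e (n i)) = ∑ i ∈ range k, c i := by
      rw [map_sum]
      refine sum_congr rfl fun i _ => ?_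
      rw [map_smul, hSe, smul_eq_mul, mul_one]
    calc ∑ i ∈ range k, c i = S (∑ i ∈ range k, c i • e (n i)) := hS.symm
      _ ≤ |S (∑ i ∈ range k, c i • e (n i))| := le_abs_self _
      _ = ‖S (∑ i ∈ range k, c i • e (n i))‖ := (Real.norm_eq_abs _).symm
      _ ≤ ‖S‖ * ‖∑ i ∈ range k, c i • e (n i)‖ := S.le_opNorm _
      _ = ‖∑ i ∈ range k, c i • e (n i)‖ := by rw [hSnorm, one_mul]
end

section
/- In the James space J with its summing (boundedly complete) basis (eᵢ), let (uᵢ)_{i=1}^{n} be a block basis such that S(uᵢ) = 0 for all i, where S is the summing functional. Then (Σ_{i=1}^{n} ‖uᵢ‖²)^{1/2} ≤ ‖Σ_{i=1}^{n} uᵢ‖ ≤ 2(Σ_{i=1}^{n} ‖uᵢ‖²)^{1/2}. -/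
open Finset

noncomputable def jamesNorm (a : ℕ →₀ ℝ) : ℝ :=
  sSup {r : ℝ | ∃ (k : ℕ) (p q : ℕ → ℕ),
    (∀ j < k, p j ≤ q j) ∧ (∀ j, j + 1 < k → q j < p (j + 1)) ∧
    r = Real.sqrt (∑ j ∈ range k, (∑ i ∈ Finset.Icc (p j) (q j), a i) ^ 2)}

namespace JamesProof

def T (a : ℕ →₀ ℝ) : Set ℝ :=
  {r : ℝ | ∃ (k : ℕ) (p q : ℕ → ℕ),
    (∀ j < k, p j ≤ q j) ∧ (∀ j, j + 1 < k → q j < p (j + 1)) ∧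
    r = Real.sqrt (∑ j ∈ range k, (∑ i ∈ Finset.Icc (p j) (q j), a i) ^ 2)}

lemma jamesNorm_eq (a : ℕ →₀ ℝ) : jamesNorm a = sSup (T a) := rfl

lemma zero_mem (a : ℕ →₀ ℝ) : (0:ℝ) ∈ T a :=
  ⟨0, id, id, by simp, by simp, by simp⟩

lemma T_nonneg {a : ℕ →₀ ℝ} {r : ℝ} (h : r ∈ T a) : 0 ≤ r := by
  obtain ⟨k, p, q, _, _, rfl⟩ := h; exact Real.sqrt_nonneg _

lemma chain {k : ℕ} {p q : ℕ → ℕ} (hpq : ∀ j < k, p j ≤ q j)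
    (hsucc : ∀ j, j + 1 < k → q j < p (j + 1)) :
    ∀ j' < k, ∀ j < j', q j < p j' := by
  intro j'
  induction j' with
  | zero => intro _ j hj; exact absurd hj (Nat.not_lt_zero j)
  | succ m ih =>
    intro hm1 j hj
    rcases Nat.lt_succ_iff_lt_or_eq.mp hj with h | h
    · calc q j < p m := ih (by omega) j h
        _ ≤ q m := hpq m (by omega)
        _ < p (m + 1) := hsucc m hm1
    · subst h; exact hsucc j hm1

lemma bddAbove_T (a : ℕ →₀ ℝ) : BddAbove (T a) := by
  refine ⟨∑ i ∈ a.support, |a i|, ?_⟩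
  rintro r ⟨k, p, q, hpq, hsucc, rfl⟩
  have hch := chain hpq hsucc
  set s : ℕ → ℝ := fun j => ∑ i ∈ Finset.Icc (p j) (q j), a i with hs
  set E : ℕ → Finset ℕ := fun j => Finset.Icc (p j) (q j) ∩ a.support with hE
  have hsE : ∀ j, s j = ∑ i ∈ E j, a i := by
    intro j
    refine (Finset.sum_subset Finset.inter_subset_left ?_).symm
    intro x hx hx'
    have : x ∉ a.support := fun hxs => hx' (Finset.mem_inter.mpr ⟨hx, hxs⟩)
    simpa using this
  have h2 : Real.sqrt (∑ j ∈ range k, s j ^ 2) ≤ ∑ j ∈ range k, |s j| := by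
    have h1 : ∑ j ∈ range k, s j ^ 2 ≤ (∑ j ∈ range k, |s j|) ^ 2 := by
      have := Finset.sum_sq_le_sq_sum_of_nonneg
        (s := range k) (f := fun j => |s j|) (fun i _ => abs_nonneg _)
      simpa [sq_abs] using this
    calc Real.sqrt (∑ j ∈ range k, s j ^ 2)
        ≤ Real.sqrt ((∑ j ∈ range k, |s j|) ^ 2) := Real.sqrt_le_sqrt h1
      _ = abs (∑ j ∈ range k, |s j|) := Real.sqrt_sq_eq_abs _
      _ = ∑ j ∈ range k, |s j| := abs_of_nonneg (Finset.sum_nonneg fun _ _ => abs_nonneg _)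
  refine h2.trans ?_
  have h3 : ∑ j ∈ range k, |s j| ≤ ∑ j ∈ range k, ∑ i ∈ E j, |a i| := by
    refine Finset.sum_le_sum fun j _ => ?_
    rw [hsE j]; exact Finset.abs_sum_le_sum_abs _ _
  refine h3.trans ?_
  have hdisj : (↑(range k) : Set ℕ).PairwiseDisjoint E := by
    intro x hx y hy hxy
    simp only [Finset.coe_range, Set.mem_Iio] at hx hy
    have key : ∀ {x y : ℕ}, x < y → y < k → Disjoint (E x) (E y) := by
      intro x y hlt hyk
      rw [Finset.disjoint_left]
      intro z hz hz'
      simp only [hE, Finset.mem_inter, Finset.mem_Icc] at hz hz'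
      have := hch y hyk x hlt
      omega
    rcases lt_or_gt_of_ne hxy with h | h
    · exact key h hy
    · exact (key h hx).symm
  rw [← Finset.sum_biUnion hdisj]
  refine Finset.sum_le_sum_of_subset_of_nonneg ?_ (fun _ _ _ => abs_nonneg _)
  intro x hx
  simp only [Finset.mem_biUnion, hE, Finset.mem_inter] at hx
  obtain ⟨j, _, _, hxs⟩ := hx
  exact hxs

lemma jamesNorm_nonneg (a : ℕ →₀ ℝ) : 0 ≤ jamesNorm a :=
  le_csSup (bddAbove_T a) (zero_mem a)

lemma value_le_sq (a : ℕ →₀ ℝ) (J : Finset ℕ) (p q : ℕ → ℕ)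
    (hpq : ∀ j ∈ J, p j ≤ q j)
    (hord : ∀ j ∈ J, ∀ j' ∈ J, j < j' → q j < p j') :
    ∑ j ∈ J, (∑ i ∈ Finset.Icc (p j) (q j), a i) ^ 2 ≤ jamesNorm a ^ 2 := by
  classical
  set k := J.card with hk
  let e : Fin k ↪o ℕ := J.orderEmbOfFin hk.symm
  have hmem : ∀ i : Fin k, e i ∈ J := fun i => J.orderEmbOfFin_mem hk.symm i
  set P : ℕ → ℕ := fun j => if h : j < k then p (e ⟨j, h⟩) else 0 with hP
  set Q : ℕ → ℕ := fun j => if h : j < k then q (e ⟨j, h⟩) else 0 with hQ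
  have h1 : ∀ j < k, P j ≤ Q j := by
    intro j hj; simp only [hP, hQ, dif_pos hj]; exact hpq _ (hmem _)
  have h2 : ∀ j, j + 1 < k → Q j < P (j + 1) := by
    intro j hj
    have hj' : j < k := by omega
    simp only [hP, hQ, dif_pos hj, dif_pos hj']
    exact hord _ (hmem ⟨j, hj'⟩) _ (hmem ⟨j + 1, hj⟩)
      (e.strictMono (Fin.mk_lt_mk.mpr (by omega)))
  have hVmem : Real.sqrt (∑ j ∈ range k, (∑ i ∈ Finset.Icc (P j) (Q j), a i) ^ 2) ∈ T a :=
    ⟨k, P, Q, h1, h2, rfl⟩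
  have hsum : ∑ j ∈ range k, (∑ i ∈ Finset.Icc (P j) (Q j), a i) ^ 2
      = ∑ j ∈ J, (∑ i ∈ Finset.Icc (p j) (q j), a i) ^ 2 := by
    rw [← Fin.sum_univ_eq_sum_range]
    have hcong : ∀ j : Fin k, (∑ i ∈ Finset.Icc (P j.val) (Q j.val), a i) ^ 2
        = (∑ i ∈ Finset.Icc (p (e j)) (q (e j)), a i) ^ 2 := by
      intro j
      have h := j.isLt
      simp [hP, hQ, dif_pos h]
    rw [Finset.sum_congr rfl (fun j _ => hcong j)]
    have hJ : J = Finset.image (fun i : Fin k => e i) Finset.univ := by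
      ext x
      simp only [Finset.mem_image, Finset.mem_univ, true_and]
      constructor
      · intro hx
        have hx' : x ∈ Set.range e := by
          rw [Finset.range_orderEmbOfFin]; exact hx
        obtain ⟨i, hi⟩ := hx'
        exact ⟨i, hi⟩
      · rintro ⟨i, rfl⟩; exact hmem i
    rw [hJ, Finset.sum_image (fun i _ j _ h => e.injective h)]
  rw [← hsum]
  have hnn : 0 ≤ ∑ j ∈ range k, (∑ i ∈ Finset.Icc (P j) (Q j), a i) ^ 2 :=
    Finset.sum_nonneg fun _ _ => sq_nonneg _
  have hle := le_csSup (bddAbove_T a) hVmem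
  rw [← jamesNorm_eq] at hle
  nlinarith [Real.sq_sqrt hnn,
    Real.sqrt_nonneg (∑ j ∈ range k, (∑ i ∈ Finset.Icc (P j) (Q j), a i) ^ 2),
    jamesNorm_nonneg a]

lemma jamesNorm_zero : jamesNorm (0 : ℕ →₀ ℝ) = 0 := by
  rw [jamesNorm_eq]
  apply le_antisymm
  · apply csSup_le ⟨0, zero_mem 0⟩
    rintro r ⟨k, p, q, _, _, rfl⟩
    simp
  · exact le_csSup (bddAbove_T 0) (zero_mem 0)

lemma sup_sq_le (a : ℕ →₀ ℝ) {C : ℝ} (h : ∀ r ∈ T a, r ^ 2 ≤ C) :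
    jamesNorm a ^ 2 ≤ C := by
  have hC : 0 ≤ C := by simpa using h 0 (zero_mem a)
  have h1 : jamesNorm a ≤ Real.sqrt C := by
    rw [jamesNorm_eq]
    exact csSup_le ⟨0, zero_mem a⟩ (fun r hr => Real.le_sqrt_of_sq_le (h r hr))
  nlinarith [jamesNorm_nonneg a, Real.sq_sqrt hC, Real.sqrt_nonneg C]

lemma sq_sum_card_le_one {α : Type*} (s : Finset α) (f : α → ℝ) (h : s.card ≤ 1) :
    (∑ i ∈ s, f i) ^ 2 = ∑ i ∈ s, f i ^ 2 := by
  rcases s.eq_empty_or_nonempty with rfl | ⟨x, hx⟩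
  · simp
  · have : s = {x} := by
      refine Finset.eq_singleton_iff_unique_mem.mpr ⟨hx, fun y hy => ?_⟩
      by_contra hne
      have : 2 ≤ s.card := Finset.one_lt_card.mpr ⟨y, hy, x, hx, hne⟩
      omega
    subst this; simp

lemma lower_two (v w : ℕ →₀ ℝ)
    (hsep : ∀ s ∈ v.support, ∀ t ∈ w.support, s < t) :
    jamesNorm v ^ 2 + jamesNorm w ^ 2 ≤ jamesNorm (v + w) ^ 2 := by
  classical
  rcases eq_or_ne v 0 with rfl | hv
  · simp [jamesNorm_zero]
  rcases eq_or_ne w 0 with rfl | hw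
  · simp [jamesNorm_zero]
  have hvs : v.support.Nonempty := Finsupp.support_nonempty_iff.mpr hv
  have hws : w.support.Nonempty := Finsupp.support_nonempty_iff.mpr hw
  set Mv := v.support.max' hvs with hMv
  set mw := w.support.min' hws with hmw
  have hsepM : Mv < mw := hsep _ (v.support.max'_mem hvs) _ (w.support.min'_mem hws)
  have hvvan : ∀ x, Mv < x → v x = 0 := by
    intro x hx
    by_contra h
    exact absurd (Finset.le_max' _ x (Finsupp.mem_support_iff.mpr h)) (by omega)
  have hwvan : ∀ x, x < mw → w x = 0 := by
    intro x hx
    by_contra h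
    exact absurd (Finset.min'_le _ x (Finsupp.mem_support_iff.mpr h)) (by omega)
  have key : ∀ r1 ∈ T v, ∀ r2 ∈ T w, r1 ^ 2 + r2 ^ 2 ≤ jamesNorm (v + w) ^ 2 := by
    rintro _ ⟨k₁, p₁, q₁, hpq₁, hsucc₁, rfl⟩ _ ⟨k₂, p₂, q₂, hpq₂, hsucc₂, rfl⟩
    have hch₁ := chain hpq₁ hsucc₁
    have hch₂ := chain hpq₂ hsucc₂
    set J₁ := (range k₁).filter (fun j => p₁ j ≤ Mv) with hJ₁
    set J₂ := ((range k₂).filter (fun j => mw ≤ q₂ j)).image (· + k₁) with hJ₂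
    set P : ℕ → ℕ := fun j => if j < k₁ then p₁ j else max (p₂ (j - k₁)) mw with hPd
    set Q : ℕ → ℕ := fun j => if j < k₁ then min (q₁ j) Mv else q₂ (j - k₁) with hQd
    have hJ₁mem : ∀ j ∈ J₁, j < k₁ ∧ p₁ j ≤ Mv := by
      intro j hj; simp only [hJ₁, Finset.mem_filter, Finset.mem_range] at hj; exact hj
    have hJ₂mem : ∀ j ∈ J₂, ∃ b, b < k₂ ∧ mw ≤ q₂ b ∧ j = b + k₁ := by
      intro j hj
      simp only [hJ₂, Finset.mem_image, Finset.mem_filter, Finset.mem_range] at hj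
      obtain ⟨b, ⟨hb1, hb2⟩, rfl⟩ := hj
      exact ⟨b, hb1, hb2, rfl⟩
    have hPQ : ∀ j ∈ J₁ ∪ J₂, P j ≤ Q j := by
      intro j hj
      rcases Finset.mem_union.mp hj with hj | hj
      · obtain ⟨h1, h2⟩ := hJ₁mem j hj
        simp only [hPd, hQd, if_pos h1]
        exact le_min (hpq₁ j h1) h2
      · obtain ⟨b, hb1, hb2, rfl⟩ := hJ₂mem j hj
        have hnk : ¬ b + k₁ < k₁ := by omega
        simp only [hPd, hQd, if_neg hnk, Nat.add_sub_cancel]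
        exact max_le (hpq₂ b hb1) hb2
    have hORD : ∀ j ∈ J₁ ∪ J₂, ∀ j' ∈ J₁ ∪ J₂, j < j' → Q j < P j' := by
      intro j hj j' hj' hjj'
      rcases Finset.mem_union.mp hj with hj | hj <;>
        rcases Finset.mem_union.mp hj' with hj' | hj'
      · obtain ⟨h1, h2⟩ := hJ₁mem j hj
        obtain ⟨h1', h2'⟩ := hJ₁mem j' hj'
        simp only [hPd, hQd, if_pos h1, if_pos h1']
        exact lt_of_le_of_lt (min_le_left _ _) (hch₁ j' h1' j hjj')
      · obtain ⟨h1, h2⟩ := hJ₁mem j hj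
        obtain ⟨b, hb1, hb2, rfl⟩ := hJ₂mem j' hj'
        have hnk : ¬ b + k₁ < k₁ := by omega
        simp only [hPd, hQd, if_pos h1, if_neg hnk, Nat.add_sub_cancel]
        calc min (q₁ j) Mv ≤ Mv := min_le_right _ _
          _ < mw := hsepM
          _ ≤ max (p₂ b) mw := le_max_right _ _
      · obtain ⟨b, hb1, hb2, rfl⟩ := hJ₂mem j hj
        obtain ⟨h1', h2'⟩ := hJ₁mem j' hj'
        omega
      · obtain ⟨b, hb1, hb2, rfl⟩ := hJ₂mem j hj
        obtain ⟨b', hb1', hb2', rfl⟩ := hJ₂mem j' hj'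
        have hnk : ¬ b + k₁ < k₁ := by omega
        have hnk' : ¬ b' + k₁ < k₁ := by omega
        simp only [hPd, hQd, if_neg hnk, if_neg hnk', Nat.add_sub_cancel]
        exact lt_of_lt_of_le (hch₂ b' hb1' b (by omega)) (le_max_left _ _)
    have main := value_le_sq (v + w) (J₁ ∪ J₂) P Q hPQ hORD
    have hdisj : Disjoint J₁ J₂ := by
      rw [Finset.disjoint_left]
      intro j hj hj'
      obtain ⟨h1, _⟩ := hJ₁mem j hj
      obtain ⟨b, _, _, rfl⟩ := hJ₂mem j hj'
      omega
    rw [Finset.sum_union hdisj] at main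
    have hS₁ : ∑ j ∈ J₁, (∑ i ∈ Finset.Icc (P j) (Q j), (v + w) i) ^ 2
        = ∑ j ∈ range k₁, (∑ i ∈ Finset.Icc (p₁ j) (q₁ j), v i) ^ 2 := by
      have hcg : ∀ j ∈ J₁, (∑ i ∈ Finset.Icc (P j) (Q j), (v + w) i) ^ 2
          = (∑ i ∈ Finset.Icc (p₁ j) (q₁ j), v i) ^ 2 := by
        intro j hj
        obtain ⟨h1, h2⟩ := hJ₁mem j hj
        simp only [hPd, hQd, if_pos h1]
        congr 1
        have hstep1 : ∑ i ∈ Finset.Icc (p₁ j) (min (q₁ j) Mv), (v + w) i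
            = ∑ i ∈ Finset.Icc (p₁ j) (min (q₁ j) Mv), v i := by
          refine Finset.sum_congr rfl fun x hx => ?_
          rw [Finset.mem_Icc] at hx
          have hw0 : w x = 0 := hwvan x (by omega)
          simp [hw0]
        rw [hstep1]
        refine Finset.sum_subset (Finset.Icc_subset_Icc le_rfl (min_le_left _ _)) ?_
        intro x hx hx'
        rw [Finset.mem_Icc] at hx
        rw [Finset.mem_Icc] at hx'
        have hlt : min (q₁ j) Mv < x := by omega
        rcases min_lt_iff.mp hlt with h | h
        · omega
        · exact hvvan x h
      rw [Finset.sum_congr rfl hcg]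
      refine Finset.sum_subset (Finset.filter_subset _ _) ?_
      intro j hjr hj
      simp only [hJ₁, Finset.mem_filter, Finset.mem_range] at hj
      rw [Finset.mem_range] at hjr
      have hzero : ∑ i ∈ Finset.Icc (p₁ j) (q₁ j), v i = 0 := by
        refine Finset.sum_eq_zero fun x hx => ?_
        rw [Finset.mem_Icc] at hx
        exact hvvan x (by omega)
      rw [hzero]; ring
    have hS₂ : ∑ j ∈ J₂, (∑ i ∈ Finset.Icc (P j) (Q j), (v + w) i) ^ 2
        = ∑ j ∈ range k₂, (∑ i ∈ Finset.Icc (p₂ j) (q₂ j), w i) ^ 2 := by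
      have himg : ∑ j ∈ J₂, (∑ i ∈ Finset.Icc (P j) (Q j), (v + w) i) ^ 2
          = ∑ b ∈ (range k₂).filter (fun j => mw ≤ q₂ j),
              (∑ i ∈ Finset.Icc (P (b + k₁)) (Q (b + k₁)), (v + w) i) ^ 2 := by
        rw [hJ₂]
        refine Finset.sum_image ?_
        intro x _ y _ h
        simp only at h
        omega
      rw [himg]
      have hcg : ∀ b ∈ (range k₂).filter (fun j => mw ≤ q₂ j),
          (∑ i ∈ Finset.Icc (P (b + k₁)) (Q (b + k₁)), (v + w) i) ^ 2
          = (∑ i ∈ Finset.Icc (p₂ b) (q₂ b), w i) ^ 2 := by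
        intro b hb
        simp only [Finset.mem_filter, Finset.mem_range] at hb
        obtain ⟨hb1, hb2⟩ := hb
        have hnk : ¬ b + k₁ < k₁ := by omega
        simp only [hPd, hQd, if_neg hnk, Nat.add_sub_cancel]
        congr 1
        have hstep1 : ∑ i ∈ Finset.Icc (max (p₂ b) mw) (q₂ b), (v + w) i
            = ∑ i ∈ Finset.Icc (max (p₂ b) mw) (q₂ b), w i := by
          refine Finset.sum_congr rfl fun x hx => ?_
          rw [Finset.mem_Icc] at hx
          have hv0 : v x = 0 := hvvan x (by omega)
          simp [hv0]
        rw [hstep1]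
        refine Finset.sum_subset (Finset.Icc_subset_Icc (le_max_left _ _) le_rfl) ?_
        intro x hx hx'
        rw [Finset.mem_Icc] at hx
        rw [Finset.mem_Icc] at hx'
        have hlt : x < max (p₂ b) mw := by omega
        rcases lt_max_iff.mp hlt with h | h
        · omega
        · exact hwvan x h
      rw [Finset.sum_congr rfl hcg]
      refine Finset.sum_subset (Finset.filter_subset _ _) ?_
      intro j hjr hj
      simp only [Finset.mem_filter, Finset.mem_range] at hj
      rw [Finset.mem_range] at hjr
      have hzero : ∑ i ∈ Finset.Icc (p₂ j) (q₂ j), w i = 0 := by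
        refine Finset.sum_eq_zero fun x hx => ?_
        rw [Finset.mem_Icc] at hx
        exact hwvan x (by omega)
      rw [hzero]; ring
    rw [hS₁, hS₂] at main
    have hnn₁ : 0 ≤ ∑ j ∈ range k₁, (∑ i ∈ Finset.Icc (p₁ j) (q₁ j), v i) ^ 2 :=
      Finset.sum_nonneg fun _ _ => sq_nonneg _
    have hnn₂ : 0 ≤ ∑ j ∈ range k₂, (∑ i ∈ Finset.Icc (p₂ j) (q₂ j), w i) ^ 2 :=
      Finset.sum_nonneg fun _ _ => sq_nonneg _
    rw [Real.sq_sqrt hnn₁, Real.sq_sqrt hnn₂]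
    exact main
  have step1 : ∀ r2 ∈ T w, jamesNorm v ^ 2 + r2 ^ 2 ≤ jamesNorm (v + w) ^ 2 := by
    intro r2 hr2
    have h := sup_sq_le v (C := jamesNorm (v + w) ^ 2 - r2 ^ 2)
      (fun r1 hr1 => by linarith [key r1 hr1 r2 hr2])
    linarith
  have step2 := sup_sq_le w (C := jamesNorm (v + w) ^ 2 - jamesNorm v ^ 2)
    (fun r2 hr2 => by linarith [step1 r2 hr2])
  linarith

lemma lower_all : ∀ (n : ℕ) (u : Fin n → (ℕ →₀ ℝ)),
    (∀ i j : Fin n, i < j → ∀ s ∈ (u i).support, ∀ t ∈ (u j).support, s < t) →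
    ∑ i, jamesNorm (u i) ^ 2 ≤ jamesNorm (∑ i, u i) ^ 2 := by
  intro n
  induction n with
  | zero =>
    intro u _
    simp [jamesNorm_zero]
  | succ n ih =>
    intro u hblock
    rw [Fin.sum_univ_castSucc (f := fun i => jamesNorm (u i) ^ 2),
      Fin.sum_univ_castSucc (f := fun i => u i)]
    have h1 := ih (fun i => u i.castSucc)
      (fun i j hij => hblock _ _ (Fin.castSucc_lt_castSucc_iff.mpr hij))
    have hsep : ∀ s ∈ (∑ i : Fin n, u i.castSucc).support,
        ∀ t ∈ (u (Fin.last n)).support, s < t := by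
      intro s hs t ht
      have hsub := Finsupp.support_finset_sum (s := (univ : Finset (Fin n)))
        (f := fun i => u i.castSucc) hs
      rw [Finset.mem_biUnion] at hsub
      obtain ⟨i, _, hi⟩ := hsub
      exact hblock i.castSucc (Fin.last n) (Fin.castSucc_lt_last i) s hi t ht
    calc ∑ i : Fin n, jamesNorm (u i.castSucc) ^ 2 + jamesNorm (u (Fin.last n)) ^ 2
        ≤ jamesNorm (∑ i : Fin n, u i.castSucc) ^ 2 + jamesNorm (u (Fin.last n)) ^ 2 :=
          add_le_add_left h1 _
      _ ≤ jamesNorm (∑ i : Fin n, u i.castSucc + u (Fin.last n)) ^ 2 := lower_two _ _ hsep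

lemma upper (n : ℕ) (u : Fin n → (ℕ →₀ ℝ))
    (hS : ∀ i, ∑ j ∈ (u i).support, u i j = 0)
    (hblock : ∀ i j : Fin n, i < j → ∀ s ∈ (u i).support, ∀ t ∈ (u j).support, s < t)
    (hne : ∀ i, u i ≠ 0) :
    jamesNorm (∑ i, u i) ≤ 2 * Real.sqrt (∑ i, jamesNorm (u i) ^ 2) := by
  classical
  set v := ∑ i, u i with hv
  rw [jamesNorm_eq]
  refine csSup_le ⟨0, zero_mem v⟩ ?_
  rintro r ⟨k, p, q, hpq, hsucc, rfl⟩
  have hch := chain hpq hsucc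
  set m : Fin n → ℕ := fun i => (u i).support.min' (Finsupp.support_nonempty_iff.mpr (hne i)) with hm
  set M : Fin n → ℕ := fun i => (u i).support.max' (Finsupp.support_nonempty_iff.mpr (hne i)) with hMdef
  have hvan : ∀ (i : Fin n) (x : ℕ), x < m i ∨ M i < x → u i x = 0 := by
    intro i x hx
    by_contra h
    have hxs := Finsupp.mem_support_iff.mpr h
    simp only [hm, hMdef] at hx
    rcases hx with hx | hx
    · exact absurd (Finset.min'_le _ x hxs) (by omega)
    · exact absurd (Finset.le_max' _ x hxs) (by omega)
  have hMm : ∀ i i' : Fin n, i < i' → M i < m i' := by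
    intro i i' h
    exact hblock i i' h _ (Finset.max'_mem _ _) _ (Finset.min'_mem _ _)
  set t : Fin n → ℕ → ℝ := fun i j => ∑ x ∈ Finset.Icc (p j) (q j), u i x with ht
  have hst : ∀ j, ∑ x ∈ Finset.Icc (p j) (q j), v x = ∑ i, t i j := by
    intro j
    simp only [hv, Finsupp.finset_sum_apply]
    exact Finset.sum_comm
  set CL : Fin n → ℕ → Prop := fun i j => m i < p j ∧ p j ≤ M i with hCL
  set CR : Fin n → ℕ → Prop := fun i j => m i ≤ q j ∧ q j < M i with hCR
  have claimA : ∀ j < k, ∀ i : Fin n, ¬ CL i j → ¬ CR i j → t i j = 0 := by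
    intro j hjk i hL hR
    by_cases h1 : q j < m i
    · refine Finset.sum_eq_zero fun x hx => ?_
      rw [Finset.mem_Icc] at hx
      exact hvan i x (Or.inl (by omega))
    by_cases h2 : M i < p j
    · refine Finset.sum_eq_zero fun x hx => ?_
      rw [Finset.mem_Icc] at hx
      exact hvan i x (Or.inr (by omega))
    have hMq : M i ≤ q j := by
      by_contra h
      exact hR ⟨by omega, by omega⟩
    have hpm : p j ≤ m i := by
      by_contra h
      exact hL ⟨by omega, by omega⟩
    have hsub : (u i).support ⊆ Finset.Icc (p j) (q j) := by
      intro x hx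
      rw [Finset.mem_Icc]
      exact ⟨le_trans hpm (Finset.min'_le _ x hx), le_trans (Finset.le_max' _ x hx) hMq⟩
    have hext := Finset.sum_subset hsub (fun x _ hx => Finsupp.notMem_support_iff.mp hx)
    show ∑ x ∈ Finset.Icc (p j) (q j), u i x = 0
    rw [← hext]
    exact hS i
  set L : ℕ → Finset (Fin n) := fun j => univ.filter (fun i => CL i j) with hLdef
  set R : ℕ → Finset (Fin n) := fun j => univ.filter (fun i => CR i j ∧ ¬ CL i j) with hRdef
  have cardL : ∀ j, (L j).card ≤ 1 := by
    intro j
    refine Finset.card_le_one.mpr ?_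
    intro i hi i' hi'
    simp only [hLdef, Finset.mem_filter, hCL, Finset.mem_univ, true_and] at hi hi'
    by_contra hne'
    rcases lt_or_gt_of_ne hne' with h | h
    · have := hMm i i' h; omega
    · have := hMm i' i h; omega
  have cardR : ∀ j, (R j).card ≤ 1 := by
    intro j
    refine Finset.card_le_one.mpr ?_
    intro i hi i' hi'
    simp only [hRdef, Finset.mem_filter, hCR, hCL, Finset.mem_univ, true_and] at hi hi'
    obtain ⟨⟨hi1, hi2⟩, _⟩ := hi
    obtain ⟨⟨hi1', hi2'⟩, _⟩ := hi'
    by_contra hne'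
    rcases lt_or_gt_of_ne hne' with h | h
    · have := hMm i i' h; omega
    · have := hMm i' i h; omega
  have hsplit : ∀ j < k, ∑ x ∈ Finset.Icc (p j) (q j), v x
      = ∑ i ∈ L j, t i j + ∑ i ∈ R j, t i j := by
    intro j hjk
    rw [hst j]
    have hdisj : Disjoint (L j) (R j) := by
      rw [Finset.disjoint_left]
      intro i hi hi'
      simp only [hLdef, hRdef, Finset.mem_filter] at hi hi'
      exact hi'.2.2 hi.2
    rw [← Finset.sum_union hdisj]
    refine (Finset.sum_subset (Finset.subset_univ _) ?_).symm
    intro i _ hi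
    simp only [Finset.mem_union, hLdef, hRdef, Finset.mem_filter, Finset.mem_univ,
      true_and] at hi
    push_neg at hi
    obtain ⟨hiL, hiR⟩ := hi
    exact claimA j hjk i hiL (fun hr => hiL (hiR hr))
  have hLbound : ∑ j ∈ range k, ∑ i ∈ L j, t i j ^ 2 ≤ ∑ i, jamesNorm (u i) ^ 2 := by
    have hswap : ∑ j ∈ range k, ∑ i ∈ L j, t i j ^ 2
        = ∑ i : Fin n, ∑ j ∈ (range k).filter (fun j => CL i j), t i j ^ 2 := by
      simp only [hLdef, Finset.sum_filter]
      exact Finset.sum_comm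
    rw [hswap]
    refine Finset.sum_le_sum fun i _ => ?_
    have hcg : ∀ j ∈ (range k).filter (fun j => CL i j),
        t i j ^ 2 = (∑ x ∈ Finset.Icc (p j) (min (q j) (M i)), u i x) ^ 2 := by
      intro j hj
      simp only [Finset.mem_filter, Finset.mem_range, hCL] at hj
      obtain ⟨hjk, hj1, hj2⟩ := hj
      congr 1
      refine (Finset.sum_subset (Finset.Icc_subset_Icc le_rfl (min_le_left _ _)) ?_).symm
      intro x hx hx'
      rw [Finset.mem_Icc] at hx
      rw [Finset.mem_Icc] at hx'
      have hlt : min (q j) (M i) < x := by omega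
      rcases min_lt_iff.mp hlt with h | h
      · omega
      · exact hvan i x (Or.inr h)
    rw [Finset.sum_congr rfl hcg]
    refine value_le_sq (u i) _ p (fun j => min (q j) (M i)) ?_ ?_
    · intro j hj
      simp only [Finset.mem_filter, Finset.mem_range, hCL] at hj
      exact le_min (hpq j hj.1) hj.2.2
    · intro j hj j' hj' hjj'
      simp only [Finset.mem_filter, Finset.mem_range] at hj hj'
      exact lt_of_le_of_lt (min_le_left _ _) (hch j' hj'.1 j hjj')
  have hRbound : ∑ j ∈ range k, ∑ i ∈ R j, t i j ^ 2 ≤ ∑ i, jamesNorm (u i) ^ 2 := by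
    have hswap : ∑ j ∈ range k, ∑ i ∈ R j, t i j ^ 2
        = ∑ i : Fin n, ∑ j ∈ (range k).filter (fun j => CR i j ∧ ¬ CL i j), t i j ^ 2 := by
      simp only [hRdef, Finset.sum_filter]
      exact Finset.sum_comm
    rw [hswap]
    refine Finset.sum_le_sum fun i _ => ?_
    have hcg : ∀ j ∈ (range k).filter (fun j => CR i j ∧ ¬ CL i j),
        t i j ^ 2 = (∑ x ∈ Finset.Icc (max (p j) (m i)) (q j), u i x) ^ 2 := by
      intro j hj
      simp only [Finset.mem_filter, Finset.mem_range, hCR] at hj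
      congr 1
      refine (Finset.sum_subset (Finset.Icc_subset_Icc (le_max_left _ _) le_rfl) ?_).symm
      intro x hx hx'
      rw [Finset.mem_Icc] at hx
      rw [Finset.mem_Icc] at hx'
      have hlt : x < max (p j) (m i) := by omega
      rcases lt_max_iff.mp hlt with h | h
      · omega
      · exact hvan i x (Or.inl h)
    rw [Finset.sum_congr rfl hcg]
    refine value_le_sq (u i) _ (fun j => max (p j) (m i)) q ?_ ?_
    · intro j hj
      simp only [Finset.mem_filter, Finset.mem_range, hCR] at hj
      exact max_le (hpq j hj.1) hj.2.1.1
    · intro j hj j' hj' hjj'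
      simp only [Finset.mem_filter, Finset.mem_range] at hj hj'
      exact lt_of_lt_of_le (hch j' hj'.1 j hjj') (le_max_left _ _)
  have hbound : ∑ j ∈ range k, (∑ x ∈ Finset.Icc (p j) (q j), v x) ^ 2
      ≤ 4 * ∑ i, jamesNorm (u i) ^ 2 := by
    have h2ab : ∀ j ∈ range k, (∑ x ∈ Finset.Icc (p j) (q j), v x) ^ 2
        ≤ 2 * (∑ i ∈ L j, t i j ^ 2) + 2 * (∑ i ∈ R j, t i j ^ 2) := by
      intro j hj
      rw [Finset.mem_range] at hj
      rw [hsplit j hj, ← sq_sum_card_le_one _ _ (cardL j), ← sq_sum_card_le_one _ _ (cardR j)]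
      nlinarith [sq_nonneg (∑ i ∈ L j, t i j - ∑ i ∈ R j, t i j)]
    calc ∑ j ∈ range k, (∑ x ∈ Finset.Icc (p j) (q j), v x) ^ 2
        ≤ ∑ j ∈ range k, (2 * (∑ i ∈ L j, t i j ^ 2) + 2 * (∑ i ∈ R j, t i j ^ 2)) :=
          Finset.sum_le_sum h2ab
      _ = 2 * (∑ j ∈ range k, ∑ i ∈ L j, t i j ^ 2)
          + 2 * (∑ j ∈ range k, ∑ i ∈ R j, t i j ^ 2) := by
          rw [Finset.sum_add_distrib, Finset.mul_sum, Finset.mul_sum]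
      _ ≤ 2 * (∑ i, jamesNorm (u i) ^ 2) + 2 * (∑ i, jamesNorm (u i) ^ 2) := by
          have := hLbound
          have := hRbound
          nlinarith
      _ = 4 * ∑ i, jamesNorm (u i) ^ 2 := by ring
  calc Real.sqrt (∑ j ∈ range k, (∑ x ∈ Finset.Icc (p j) (q j), v x) ^ 2)
      ≤ Real.sqrt (4 * ∑ i, jamesNorm (u i) ^ 2) := Real.sqrt_le_sqrt hbound
    _ = 2 * Real.sqrt (∑ i, jamesNorm (u i) ^ 2) := by
        have hnn : (0:ℝ) ≤ ∑ i, jamesNorm (u i) ^ 2 :=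
          Finset.sum_nonneg fun _ _ => sq_nonneg _
        rw [show (4:ℝ) * ∑ i, jamesNorm (u i) ^ 2
            = (2:ℝ) ^ 2 * ∑ i, jamesNorm (u i) ^ 2 by ring,
          Real.sqrt_mul (by positivity) _, Real.sqrt_sq (by norm_num)]

end JamesProof

/-- In the James space `J` (realized on finitely supported sequences with the James norm),
if `(uᵢ)_{i=1}^n` is a block basis with `S(uᵢ) = 0` for the summing functional `S`, then
`(Σ ‖uᵢ‖²)^{1/2} ≤ ‖Σ uᵢ‖ ≤ 2 (Σ ‖uᵢ‖²)^{1/2}`. -/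
theorem james_mean_zero_blocks_ell2
    (n : ℕ) (u : Fin n → (ℕ →₀ ℝ))
    (hS : ∀ i, ∑ j ∈ (u i).support, u i j = 0)
    (hblock : ∀ i j : Fin n, i < j →
      ∀ s ∈ (u i).support, ∀ t ∈ (u j).support, s < t)
    (hne : ∀ i, u i ≠ 0) :
    Real.sqrt (∑ i, (jamesNorm (u i)) ^ 2) ≤ jamesNorm (∑ i, u i) ∧
      jamesNorm (∑ i, u i) ≤ 2 * Real.sqrt (∑ i, (jamesNorm (u i)) ^ 2) := by
  constructor
  · have h := JamesProof.lower_all n u hblock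
    have h2 := Real.sqrt_le_sqrt h
    rwa [Real.sqrt_sq (JamesProof.jamesNorm_nonneg _)] at h2
  · exact JamesProof.upper n u hS hblock hne
end

section
/- For each countable ordinal α, the Schreier metric space S_α(ℤ) = {Σ_{i∈E} aᵢeᵢ : aᵢ ∈ ℤ, E ∈ S_α} ⊆ c₀, with the metric induced by the sup norm, does not admit a coarse embedding of c₀. -/
open Filter ZeroAtInfty
open Filter ZeroAtInfty

abbrev czero := ZeroAtInftyContinuousMap ℕ ℝ

def CoarseEmbeddingOn {X Y : Type*} [PseudoMetricSpace X] [PseudoMetricSpace Y]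
    (φ : X → Y) : Prop :=
  ∃ ρ ω : ℝ → ℝ, Monotone ρ ∧ Monotone ω ∧ Tendsto ρ atTop atTop ∧
    ∀ x₁ x₂ : X, ρ (dist x₁ x₂) ≤ dist (φ x₁) (φ x₂) ∧ dist (φ x₁) (φ x₂) ≤ ω (dist x₁ x₂)

inductive IsSchreierFamily : Ordinal → Set (Finset ℕ) → Prop
  | zero : IsSchreierFamily 0 {E | ∃ n : ℕ, E = {n}}
  | succ (α : Ordinal) (S : Set (Finset ℕ)) :
      IsSchreierFamily α S →
      IsSchreierFamily (α + 1)
        {E | ∃ (n : ℕ) (F : Fin n → Finset ℕ),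
          (∀ j, F j ∈ S) ∧
          (∀ j : Fin n, ∀ i ∈ F j, n ≤ i) ∧
          (∀ j j' : Fin n, j < j' → ∀ a ∈ F j, ∀ b ∈ F j', a < b) ∧
          E = Finset.univ.biUnion F}
  | limit (α : Ordinal) (αn : ℕ → Ordinal) (Sn : ℕ → Set (Finset ℕ)) :
      Order.IsSuccLimit α → StrictMono αn → (∀ n, αn n < α) → (⨆ n, αn n) = α →
      (∀ n, IsSchreierFamily (αn n) (Sn n)) →
      IsSchreierFamily α {E | ∃ n : ℕ, E ∈ Sn n ∧ ∀ i ∈ E, n ≤ i}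

def schreierZ (S : Set (Finset ℕ)) : Set czero :=
  {x | (∀ i : ℕ, ∃ z : ℤ, x i = (z : ℝ)) ∧ ∃ E ∈ S, ∀ i : ℕ, x i ≠ 0 → i ∈ E}

/- ## Ultrafilter limits -/

noncomputable def UU : Ultrafilter ℕ := Filter.hyperfilter ℕ

theorem UU_infinite {s : Set ℕ} (hs : s ∈ UU) : s.Infinite := fun hfin =>
  Set.Finite.notMem_hyperfilter hfin hs

theorem UU_exists_ge {s : Set ℕ} (hs : s ∈ UU) (N : ℕ) : ∃ m ∈ s, N ≤ m := by
  by_contra hno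
  push_neg at hno
  exact (UU_infinite hs) ((Set.finite_Iio N).subset (fun m hm => hno m hm))

open scoped Classical in
noncomputable def ulim (u : ℕ → ℤ) : ℤ :=
  if h : ∃ z : ℤ, {m | u m = z} ∈ UU then h.choose else 0

open scoped Classical in
theorem ulim_mem {u : ℕ → ℤ} {B : ℤ} (hB : ∀ m, |u m| ≤ B) :
    {m | u m = ulim u} ∈ UU := by
  have h : ∃ z : ℤ, {m | u m = z} ∈ UU := by
    by_contra hno
    push_neg at hno
    have h2 : ∀ z ∈ Finset.Icc (-B) B, {m | u m = z}ᶜ ∈ UU := fun z _ =>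
      (UU.compl_mem_iff_notMem (s := {m | u m = z})).2 (hno z)
    have h3 : (⋂ z ∈ Finset.Icc (-B) B, {m | u m = z}ᶜ) ∈ UU :=
      (Filter.biInter_finset_mem _).2 h2
    obtain ⟨m, hm2⟩ := (UU_infinite h3).nonempty
    simp only [Set.mem_iInter, Set.mem_compl_iff, Set.mem_setOf_eq] at hm2
    exact hm2 (u m) (Finset.mem_Icc.2 (abs_le.1 (hB m))) rfl
  rw [ulim, dif_pos h]
  exact h.choose_spec

theorem ulim_abs_le {u : ℕ → ℤ} {B : ℤ} (hB : ∀ m, |u m| ≤ B) : |ulim u| ≤ B := by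
  obtain ⟨m, hm⟩ := (UU_infinite (ulim_mem hB)).nonempty
  rw [← hm]
  exact hB m

theorem ulim_sub_ulim {u v : ℕ → ℤ} {B B' L : ℤ} (hu : ∀ m, |u m| ≤ B)
    (hv : ∀ m, |v m| ≤ B') (hL : ∀ m, |u m - v m| ≤ L) :
    |ulim u - ulim v| ≤ L := by
  obtain ⟨m, hm1, hm2⟩ := (UU_infinite (Filter.inter_mem (ulim_mem hu) (ulim_mem hv))).nonempty
  rw [← hm1, ← hm2]
  exact hL m

theorem sub_ulim_le {u : ℕ → ℤ} {B L : ℤ} (hB : ∀ m, |u m| ≤ B) (m₀ : ℕ)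
    (hL : ∀ m, |u m₀ - u m| ≤ L) : |u m₀ - ulim u| ≤ L := by
  obtain ⟨m, hm⟩ := (UU_infinite (ulim_mem hB)).nonempty
  rw [← hm]
  exact hL m

/- ## Compactness of Schreier families -/

def Cpt (S : Set (Finset ℕ)) : Prop :=
  ∀ A : Set ℕ, (∀ F : Finset ℕ, ↑F ⊆ A → ∃ E ∈ S, F ⊆ E) → A.Finite

theorem schreier_nonempty {α : Ordinal} {S : Set (Finset ℕ)}
    (hS : IsSchreierFamily α S) : S.Nonempty := by
  induction hS with
  | zero => exact ⟨{0}, ⟨0, rfl⟩⟩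
  | succ α S _ _ =>
      refine ⟨∅, ⟨0, Fin.elim0, fun j => j.elim0, fun j => j.elim0, fun j => j.elim0, ?_⟩⟩
      simp
  | limit α αn Sn _ _ _ _ _ ih =>
      obtain ⟨E, hE⟩ := ih 0
      exact ⟨E, ⟨0, hE, fun i _ => Nat.zero_le i⟩⟩


theorem enum_setup {A : Set ℕ} (hinf : A.Infinite) {a₁ : ℕ} (ha₁ : a₁ ∈ A) :
    ∃ (A' : Set ℕ) (Fm : ℕ → Finset ℕ), A'.Infinite ∧ A' ⊆ A ∧
      (∀ m, ↑(Fm m) ⊆ A) ∧ (∀ m, a₁ ∈ Fm m) ∧ Monotone Fm ∧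
      (∀ F : Finset ℕ, ↑F ⊆ A' → ∃ m₁, ∀ m, m₁ ≤ m → F ⊆ Fm m) := by
  classical
  let e := hinf.natEmbedding
  have einj : Function.Injective (fun p => (e p : ℕ)) := fun p q h =>
    e.injective (Subtype.ext h)
  refine ⟨insert a₁ (Set.range (fun p => (e p : ℕ))),
    fun m => insert a₁ ((Finset.range m).image (fun p => (e p : ℕ))), ?_, ?_, ?_, ?_, ?_, ?_⟩
  · exact (Set.infinite_range_of_injective einj).mono (Set.subset_insert _ _)
  · rintro x (rfl | ⟨p, rfl⟩)
    · exact ha₁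
    · exact (e p).2
  · intro m x hx
    simp only [Finset.coe_insert, Set.mem_insert_iff, Finset.coe_image] at hx
    rcases hx with rfl | ⟨p, _, rfl⟩
    · exact ha₁
    · exact (e p).2
  · intro m; exact Finset.mem_insert_self _ _
  · intro m m' hmm'
    exact Finset.insert_subset_insert _ (Finset.image_subset_image (by
      intro p hp; simp only [Finset.mem_range] at hp ⊢; omega))
  · intro F hF
    induction F using Finset.induction_on with
    | empty => exact ⟨0, fun m _ => Finset.empty_subset _⟩
    | @insert x F' hx ih =>
        have hF' : ↑F' ⊆ insert a₁ (Set.range (fun p => (e p : ℕ))) := by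
          refine Set.Subset.trans ?_ hF
          simp
        obtain ⟨m₁, hm₁⟩ := ih hF'
        have hxmem : x ∈ insert a₁ (Set.range (fun p => (e p : ℕ))) := hF (by simp)
        rcases hxmem with rfl | ⟨p, rfl⟩
        · exact ⟨m₁, fun m hm => Finset.insert_subset (Finset.mem_insert_self _ _) (hm₁ m hm)⟩
        · refine ⟨max m₁ (p + 1), fun m hm => Finset.insert_subset ?_ (hm₁ m (le_trans (le_max_left _ _) hm))⟩
          refine Finset.mem_insert_of_mem ?_
          refine Finset.mem_image.2 ⟨p, ?_, rfl⟩
          simp only [Finset.mem_range]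
          omega

theorem cpt_zero : Cpt {E : Finset ℕ | ∃ n : ℕ, E = {n}} := by
  intro A hA
  by_contra hfin
  have hinf : A.Infinite := hfin
  obtain ⟨a, ha⟩ := hinf.nonempty
  obtain ⟨b, hb⟩ := (hinf.diff (Set.finite_singleton a)).nonempty
  obtain ⟨hbA, hba⟩ := hb
  have hsub : ↑({a, b} : Finset ℕ) ⊆ A := by
    intro x hx
    simp only [Finset.coe_insert, Finset.coe_singleton, Set.mem_insert_iff,
      Set.mem_singleton_iff] at hx
    rcases hx with rfl | rfl
    · exact ha
    · exact hbA
  obtain ⟨E, ⟨n, rfl⟩, hE⟩ := hA _ hsub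
  have h1 : a = n := by simpa using hE (Finset.mem_insert_self _ _)
  have h2 : b = n := by
    have := hE (Finset.mem_insert_of_mem (Finset.mem_singleton_self _))
    simpa using this
  exact hba (by simp [h1, h2])

theorem inf_exists_ge {s : Set ℕ} (hs : s.Infinite) (N : ℕ) : ∃ m ∈ s, N ≤ m := by
  by_contra hno
  push_neg at hno
  exact hs ((Set.finite_Iio N).subset (fun m hm => hno m hm))

theorem cpt_limit (Sn : ℕ → Set (Finset ℕ)) (ih : ∀ n, Cpt (Sn n)) :
    Cpt {E : Finset ℕ | ∃ n : ℕ, E ∈ Sn n ∧ ∀ i ∈ E, n ≤ i} := by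
  intro A hA
  by_contra hfin
  have hinf : A.Infinite := hfin
  obtain ⟨a₁, ha₁⟩ := hinf.nonempty
  obtain ⟨A', Fm, hA'inf, hA'A, hFmA, ha₁Fm, hFmmono, habs⟩ := enum_setup hinf ha₁
  have hcov : ∀ m, ∃ E ∈ {E : Finset ℕ | ∃ n : ℕ, E ∈ Sn n ∧ ∀ i ∈ E, n ≤ i}, Fm m ⊆ E :=
    fun m => hA (Fm m) (hFmA m)
  choose E hE hFE using hcov
  simp only [Set.mem_setOf_eq] at hE
  choose n hn1 hn2 using hE
  have hna : ∀ m, n m ≤ a₁ := fun m => hn2 m a₁ (hFE m (ha₁Fm m))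
  let ν : ℕ → Fin (a₁+1) := fun m => ⟨n m, by have := hna m; omega⟩
  obtain ⟨y, hy⟩ := Finite.exists_infinite_fiber ν
  have hyinf : (ν ⁻¹' {y}).Infinite := Set.infinite_coe_iff.1 hy
  refine hA'inf (ih y.val A' ?_)
  intro F hF
  obtain ⟨m₁, hm₁⟩ := habs F hF
  obtain ⟨m, hm, hmge⟩ := inf_exists_ge hyinf m₁
  have hνm : ν m = y := hm
  have hnm : n m = y.val := by rw [← hνm]
  refine ⟨E m, ?_, Finset.Subset.trans (hm₁ m hmge) (hFE m)⟩
  rw [← hnm]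
  exact hn1 m

theorem cpt_succ (S : Set (Finset ℕ)) (hne : S.Nonempty) (ih : Cpt S) :
    Cpt {E | ∃ (n : ℕ) (F : Fin n → Finset ℕ),
          (∀ j, F j ∈ S) ∧
          (∀ j : Fin n, ∀ i ∈ F j, n ≤ i) ∧
          (∀ j j' : Fin n, j < j' → ∀ a ∈ F j, ∀ b ∈ F j', a < b) ∧
          E = Finset.univ.biUnion F} := by
  classical
  intro A hA
  by_contra hfin
  have hinf : A.Infinite := hfin
  obtain ⟨a₁, ha₁⟩ := hinf.nonempty
  obtain ⟨A', Fm, hA'inf, hA'A, hFmA, ha₁Fm, hFmmono, habs⟩ := enum_setup hinf ha₁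
  have hcov : ∀ m, ∃ E ∈ {E : Finset ℕ | ∃ (n : ℕ) (F : Fin n → Finset ℕ),
      (∀ j, F j ∈ S) ∧ (∀ j : Fin n, ∀ i ∈ F j, n ≤ i) ∧
      (∀ j j' : Fin n, j < j' → ∀ a ∈ F j, ∀ b ∈ F j', a < b) ∧
      E = Finset.univ.biUnion F}, Fm m ⊆ E := fun m => hA (Fm m) (hFmA m)
  choose E hE hFE using hcov
  simp only [Set.mem_setOf_eq] at hE
  choose n G hG1 hG2 hG3 hEeq using hE
  have hmemE : ∀ m x, x ∈ Fm m → ∃ j : Fin (n m), x ∈ G m j := by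
    intro m x hx
    have hxE : x ∈ E m := hFE m hx
    rw [hEeq m] at hxE
    obtain ⟨j, _, hj⟩ := Finset.mem_biUnion.1 hxE
    exact ⟨j, hj⟩
  have hna : ∀ m, n m ≤ a₁ := by
    intro m
    obtain ⟨j, hj⟩ := hmemE m a₁ (ha₁Fm m)
    exact hG2 m j a₁ hj
  let c : ℕ → ℕ → ℤ := fun m x =>
    if h : ∃ j : Fin (n m), x ∈ G m j then (h.choose.val : ℤ) else 0
  have hcb : ∀ x m, |c m x| ≤ (a₁ : ℤ) := by
    intro x m
    simp only [c]
    split_ifs with h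
    · rw [abs_of_nonneg (by positivity)]
      have h1 : h.choose.val < n m := h.choose.isLt
      have := hna m
      exact_mod_cast by omega
    · simp
  set cc : ℕ → ℤ := fun x => ulim (fun m => c m x) with hccdef
  have hexinf : ∃ z ∈ Finset.Icc (-(a₁:ℤ)) (a₁:ℤ), {x ∈ A' | cc x = z}.Infinite := by
    by_contra hno
    push_neg at hno
    have hcover : A' ⊆ ⋃ z ∈ Finset.Icc (-(a₁:ℤ)) (a₁:ℤ), {x ∈ A' | cc x = z} := by
      intro x hx
      have hmem : cc x ∈ Finset.Icc (-(a₁:ℤ)) (a₁:ℤ) :=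
        Finset.mem_Icc.2 (abs_le.1 (ulim_abs_le (hcb x)))
      exact Set.mem_biUnion hmem ⟨hx, rfl⟩
    exact hA'inf ((Set.Finite.biUnion (Finset.Icc _ _).finite_toSet
      (fun z hz => hno z hz)).subset hcover)
  obtain ⟨z, _, hzinf⟩ := hexinf
  refine hzinf (ih {x ∈ A' | cc x = z} ?_)
  intro F hF
  rcases F.eq_empty_or_nonempty with rfl | ⟨x₀, hx₀⟩
  · obtain ⟨E₀, hE₀⟩ := hne
    exact ⟨E₀, hE₀, Finset.empty_subset _⟩
  · have hFA' : ↑F ⊆ A' := fun x hx => (hF hx).1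
    obtain ⟨m₁, hm₁⟩ := habs F hFA'
    have hT : (⋂ x ∈ F, {m | c m x = cc x}) ∈ UU :=
      (Filter.biInter_finset_mem F).2 (fun x _ => ulim_mem (hcb x))
    obtain ⟨m, hmT, hmge⟩ := UU_exists_ge hT m₁
    simp only [Set.mem_iInter, Set.mem_setOf_eq] at hmT
    have hFm : F ⊆ Fm m := hm₁ m hmge
    have key : ∀ x ∈ F, ∃ j : Fin (n m), x ∈ G m j ∧ (j.val : ℤ) = z := by
      intro x hx
      have hex := hmemE m x (hFm hx)
      refine ⟨hex.choose, hex.choose_spec, ?_⟩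
      have hc : c m x = (hex.choose.val : ℤ) := by simp only [c]; rw [dif_pos hex]
      rw [← hc, hmT x hx, (hF hx).2]
    obtain ⟨j₀, hj₀G, hj₀z⟩ := key x₀ hx₀
    refine ⟨G m j₀, hG1 m j₀, ?_⟩
    intro x hx
    obtain ⟨j, hjG, hjz⟩ := key x hx
    have hjj : j = j₀ := by
      apply Fin.ext
      have : (j.val : ℤ) = (j₀.val : ℤ) := by rw [hjz, hj₀z]
      exact_mod_cast this
    rwa [hjj] at hjG

theorem cpt_of_schreier {α : Ordinal} {S : Set (Finset ℕ)}
    (hS : IsSchreierFamily α S) : Cpt S := by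
  induction hS with
  | zero => exact cpt_zero
  | succ α S hSold ih => exact cpt_succ S (schreier_nonempty hSold) ih
  | limit α αn Sn _ _ _ _ _ ih => exact cpt_limit Sn ih


/- counting function -/
def cnt (k : ℕ) (s : ℕ → ℕ) (j : ℕ) : ℕ :=
  ((Finset.range k).filter (fun i => j ≤ s i)).card

theorem cnt_le (k : ℕ) (s : ℕ → ℕ) (j : ℕ) : cnt k s j ≤ k := by
  refine le_trans (Finset.card_filter_le _ _) (by simp)

theorem cnt_eventually_zero (k : ℕ) (s : ℕ → ℕ) {j : ℕ}
    (hj : ∀ i < k, s i < j) : cnt k s j = 0 := by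
  rw [cnt, Finset.card_eq_zero, Finset.filter_eq_empty_iff]
  intro i hi
  have := hj i (Finset.mem_range.1 hi)
  omega

theorem cnt_full (k : ℕ) (s : ℕ → ℕ) {j : ℕ} (hj : ∀ i < k, j ≤ s i) :
    cnt k s j = k := by
  rw [cnt]
  rw [Finset.filter_true_of_mem (fun i hi => hj i (Finset.mem_range.1 hi))]
  simp

theorem cnt_update_diff (k : ℕ) (s : ℕ → ℕ) (p : ℕ) (m m' : ℕ) (j : ℕ) :
    |((cnt k (Function.update s p m) j : ℤ)) - (cnt k (Function.update s p m') j : ℤ)| ≤ 1 := by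
  classical
  set T := (Finset.range k).filter (fun i => j ≤ Function.update s p m i) with hT
  set T' := (Finset.range k).filter (fun i => j ≤ Function.update s p m' i) with hT'
  have h1 : T ⊆ T' ∪ {p} := by
    intro i hi
    rcases eq_or_ne i p with rfl | hip
    · exact Finset.mem_union_right _ (Finset.mem_singleton_self _)
    · refine Finset.mem_union_left _ ?_
      simp only [hT, Finset.mem_filter] at hi
      simp only [hT', Finset.mem_filter]
      rwa [Function.update_of_ne hip] at hi ⊢
  have h2 : T' ⊆ T ∪ {p} := by
    intro i hi
    rcases eq_or_ne i p with rfl | hip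
    · exact Finset.mem_union_right _ (Finset.mem_singleton_self _)
    · refine Finset.mem_union_left _ ?_
      simp only [hT', Finset.mem_filter] at hi
      simp only [hT, Finset.mem_filter]
      rwa [Function.update_of_ne hip] at hi ⊢
  have c1 : T.card ≤ T'.card + 1 := by
    calc T.card ≤ (T' ∪ {p}).card := Finset.card_le_card h1
    _ ≤ T'.card + 1 := le_trans (Finset.card_union_le _ _) (by simp)
  have c2 : T'.card ≤ T.card + 1 := by
    calc T'.card ≤ (T ∪ {p}).card := Finset.card_le_card h2
    _ ≤ T.card + 1 := le_trans (Finset.card_union_le _ _) (by simp)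
  have e1 : cnt k (Function.update s p m) j = T.card := rfl
  have e2 : cnt k (Function.update s p m') j = T'.card := rfl
  rw [e1, e2, abs_le]
  constructor <;> · push_cast; omega

/- the c₀ element -/
noncomputable def xtup (k : ℕ) (s : ℕ → ℕ) : czero :=
  { toFun := fun j => (cnt k s j : ℝ)
    continuous_toFun := continuous_of_discreteTopology
    zero_at_infty' := by
      rw [cocompact_eq_cofinite, Nat.cofinite_eq_atTop]
      refine tendsto_const_nhds.congr' ?_
      filter_upwards [eventually_ge_atTop ((Finset.range k).sup s + 1)] with j hj
      have : cnt k s j = 0 := by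
        refine cnt_eventually_zero k s (fun i hi => ?_)
        have : s i ≤ (Finset.range k).sup s := Finset.le_sup (Finset.mem_range.2 hi)
        omega
      simp [this] }

theorem xtup_apply (k : ℕ) (s : ℕ → ℕ) (j : ℕ) : xtup k s j = (cnt k s j : ℝ) := rfl

theorem czero_dist_le {x y : czero} {C : ℝ} (hC : 0 ≤ C)
    (h : ∀ j, |x j - y j| ≤ C) : dist x y ≤ C := by
  rw [← ZeroAtInftyContinuousMap.dist_toBCF_eq_dist]
  refine (BoundedContinuousFunction.dist_le hC).2 (fun j => ?_)
  rw [Real.dist_eq]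
  exact h j

theorem czero_coord_le_dist (x y : czero) (j : ℕ) : |x j - y j| ≤ dist x y :=
  calc |x j - y j| = dist (x.toBCF j) (y.toBCF j) := (Real.dist_eq _ _).symm
    _ ≤ dist x.toBCF y.toBCF := BoundedContinuousFunction.dist_coe_le_dist j
    _ = dist x y := ZeroAtInftyContinuousMap.dist_toBCF_eq_dist

theorem czero_coord_le_norm (x : czero) (j : ℕ) : |x j| ≤ ‖x‖ :=
  calc |x j| = ‖x.toBCF j‖ := (Real.norm_eq_abs _).symm
    _ ≤ ‖x.toBCF‖ := BoundedContinuousFunction.norm_coe_le_norm _ j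
    _ = ‖x‖ := ZeroAtInftyContinuousMap.norm_toBCF_eq_norm

theorem dist_xtup_le_one (k : ℕ) (s : ℕ → ℕ) (p : ℕ) (m m' : ℕ) :
    dist (xtup k (Function.update s p m)) (xtup k (Function.update s p m')) ≤ 1 := by
  refine czero_dist_le zero_le_one (fun j => ?_)
  rw [xtup_apply, xtup_apply]
  have := cnt_update_diff k s p m m' j
  calc |((cnt k (Function.update s p m) j : ℝ)) - (cnt k (Function.update s p m') j : ℝ)|
      = |(((cnt k (Function.update s p m) j : ℤ) - (cnt k (Function.update s p m') j : ℤ) : ℤ) : ℝ)| := by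
        push_cast; ring_nf
    _ ≤ 1 := by
        rw [← Int.cast_abs]
        exact_mod_cast this

theorem dist_xtup_le_k (k : ℕ) (s s' : ℕ → ℕ) :
    dist (xtup k s) (xtup k s') ≤ (k : ℝ) := by
  refine czero_dist_le (by positivity) (fun j => ?_)
  rw [xtup_apply, xtup_apply]
  rw [abs_sub_le_iff]
  constructor
  · have h1 : (cnt k s j : ℝ) ≤ k := by exact_mod_cast cnt_le k s j
    have h2 : (0:ℝ) ≤ (cnt k s' j : ℝ) := by positivity
    linarith
  · have h1 : (cnt k s' j : ℝ) ≤ k := by exact_mod_cast cnt_le k s' j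
    have h2 : (0:ℝ) ≤ (cnt k s j : ℝ) := by positivity
    linarith

theorem dist_xtup_ge (k : ℕ) (s s' : ℕ → ℕ) (N : ℕ)
    (hs : ∀ i < k, s i < N) (hs' : ∀ i < k, N ≤ s' i) :
    (k : ℝ) ≤ dist (xtup k s) (xtup k s') := by
  have h := czero_coord_le_dist (xtup k s) (xtup k s') N
  rw [xtup_apply, xtup_apply, cnt_eventually_zero k s hs, cnt_full k s' hs'] at h
  have : |(0:ℝ) - (k:ℝ)| = (k:ℝ) := by
    rw [zero_sub, abs_neg, abs_of_nonneg (by positivity)]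
  rw [Nat.cast_zero, this] at h
  exact h

noncomputable def glev (k : ℕ) (H : (ℕ → ℕ) → ℕ → ℤ) (j : ℕ) (s : ℕ → ℕ) (i : ℕ) : ℤ :=
  if h : k ≤ j then H s i
  else ulim (fun m => glev k H (j+1) (Function.update s j m) i)
termination_by k - j
decreasing_by omega

theorem glev_of_ge {k j : ℕ} (H : (ℕ → ℕ) → ℕ → ℤ) (h : k ≤ j) (s : ℕ → ℕ) (i : ℕ) :
    glev k H j s i = H s i := by
  rw [glev, dif_pos h]

theorem glev_of_lt {k j : ℕ} (H : (ℕ → ℕ) → ℕ → ℤ) (h : j < k) (s : ℕ → ℕ) (i : ℕ) :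
    glev k H j s i = ulim (fun m => glev k H (j+1) (Function.update s j m) i) := by
  rw [glev, dif_neg (by omega)]

section Glev

variable {k : ℕ} {H : (ℕ → ℕ) → ℕ → ℤ} {B L : ℤ}

theorem glev_bound (HB : ∀ s i, |H s i| ≤ B) :
    ∀ r j, k - j = r → ∀ s i, |glev k H j s i| ≤ B := by
  intro r
  induction r with
  | zero =>
      intro j hj s i
      rw [glev_of_ge H (by omega)]
      exact HB s i
  | succ r ih =>
      intro j hj s i
      rw [glev_of_lt H (by omega)]
      exact ulim_abs_le (fun m => ih (j+1) (by omega) _ _)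

theorem glev_lip (HB : ∀ s i, |H s i| ≤ B)
    (HL : ∀ s p m m' i, p < k → |H (Function.update s p m) i - H (Function.update s p m') i| ≤ L) :
    ∀ r j, k - j = r → ∀ q, q < j → q < k → ∀ s m m' i,
      |glev k H j (Function.update s q m) i - glev k H j (Function.update s q m') i| ≤ L := by
  intro r
  induction r with
  | zero =>
      intro j hj q hqj hqk s m m' i
      rw [glev_of_ge H (by omega), glev_of_ge H (by omega)]
      exact HL s q m m' i hqk
  | succ r ih =>
      intro j hj q hqj hqk s m m' i
      rw [glev_of_lt H (by omega), glev_of_lt H (by omega)]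
      refine ulim_sub_ulim (fun p => glev_bound HB r (j+1) (by omega) _ _)
        (fun p => glev_bound HB r (j+1) (by omega) _ _) (fun p => ?_)
      have hqj' : q ≠ j := by omega
      rw [Function.update_comm hqj' m p s, Function.update_comm hqj' m' p s]
      exact ih (j+1) (by omega) q (by omega) hqk (Function.update s j p) m m' i

theorem glev_stab (HB : ∀ s i, |H s i| ≤ B) {j : ℕ} (hj : j < k) (s : ℕ → ℕ) (F : Finset ℕ) :
    {m | ∀ i ∈ F, glev k H (j+1) (Function.update s j m) i = glev k H j s i} ∈ UU := by
  have h : ∀ i ∈ F, {m | glev k H (j+1) (Function.update s j m) i = glev k H j s i} ∈ UU := by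
    intro i _
    rw [glev_of_lt H hj]
    exact ulim_mem (fun m => glev_bound HB (k - (j+1)) (j+1) rfl _ _)
  have h2 : (⋂ i ∈ F, {m | glev k H (j+1) (Function.update s j m) i = glev k H j s i}) ∈ UU :=
    (Filter.biInter_finset_mem F).2 h
  refine Filter.mem_of_superset h2 ?_
  intro m hm
  simp only [Set.mem_iInter, Set.mem_setOf_eq] at hm ⊢
  exact hm

theorem glev_vbound (HB : ∀ s i, |H s i| ≤ B)
    (HL : ∀ s p m m' i, p < k → |H (Function.update s p m) i - H (Function.update s p m') i| ≤ L)
    {j : ℕ} (hj : j < k) (s : ℕ → ℕ) (m : ℕ) (i : ℕ) :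
    |glev k H (j+1) (Function.update s j m) i - glev k H j s i| ≤ L := by
  rw [glev_of_lt H hj]
  exact sub_ulim_le (fun m' => glev_bound HB (k - (j+1)) (j+1) rfl _ _) m
    (fun m' => glev_lip HB HL (k - (j+1)) (j+1) rfl j (by omega) hj s m m' i)

theorem glev_congr (Hdep : ∀ s s', (∀ p, p < k → s p = s' p) → ∀ i, H s i = H s' i) :
    ∀ r j, k - j = r → ∀ s s', (∀ p, p < j → s p = s' p) → ∀ i,
      glev k H j s i = glev k H j s' i := by
  intro r
  induction r with
  | zero =>
      intro j hj s s' hss i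
      rw [glev_of_ge H (by omega), glev_of_ge H (by omega)]
      exact Hdep s s' (fun p hp => hss p (by omega)) i
  | succ r ih =>
      intro j hj s s' hss i
      rw [glev_of_lt H (by omega), glev_of_lt H (by omega)]
      congr 1
      funext m
      refine ih (j+1) (by omega) _ _ (fun p hp => ?_) i
      rcases eq_or_ne p j with rfl | hpj
      · rw [Function.update_self, Function.update_self]
      · rw [Function.update_of_ne hpj, Function.update_of_ne hpj]
        exact hss p (by omega)

end Glev


section Glev2

variable {k : ℕ} {H : (ℕ → ℕ) → ℕ → ℤ} {B L : ℤ} {S : Set (Finset ℕ)}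

theorem glev_supp (HB : ∀ s i, |H s i| ≤ B)
    (Hsupp : ∀ s (F : Finset ℕ), (∀ i ∈ F, H s i ≠ 0) → ∃ E ∈ S, ∀ i ∈ F, i ∈ E) :
    ∀ r j, k - j = r → ∀ s (F : Finset ℕ), (∀ i ∈ F, glev k H j s i ≠ 0) →
      ∃ E ∈ S, ∀ i ∈ F, i ∈ E := by
  intro r
  induction r with
  | zero =>
      intro j hj s F hF
      refine Hsupp s F (fun i hi => ?_)
      rw [← glev_of_ge H (show k ≤ j by omega)]
      exact hF i hi
  | succ r ih =>
      intro j hj s F hF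
      obtain ⟨m, hm⟩ := (UU_infinite (glev_stab HB (show j < k by omega) s F)).nonempty
      refine ih (j+1) (by omega) (Function.update s j m) F (fun i hi => ?_)
      rw [hm i hi]
      exact hF i hi

theorem glev_supp_finite (HB : ∀ s i, |H s i| ≤ B)
    (Hsupp : ∀ s (F : Finset ℕ), (∀ i ∈ F, H s i ≠ 0) → ∃ E ∈ S, ∀ i ∈ F, i ∈ E)
    (hCpt : Cpt S) (j : ℕ) (s : ℕ → ℕ) :
    {i | glev k H j s i ≠ 0}.Finite := by
  refine hCpt _ (fun F hF => ?_)
  obtain ⟨E, hE, hFE⟩ := glev_supp HB Hsupp (k - j) j rfl s F (fun i hi => hF hi)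
  exact ⟨E, hE, fun i hi => hFE i hi⟩

theorem glev_construct (HB : ∀ s i, |H s i| ≤ B)
    (HL : ∀ s p m m' i, p < k → |H (Function.update s p m) i - H (Function.update s p m') i| ≤ L)
    (Hsupp : ∀ s (F : Finset ℕ), (∀ i ∈ F, H s i ≠ 0) → ∃ E ∈ S, ∀ i ∈ F, i ∈ E)
    (hCpt : Cpt S) (hL0 : 0 ≤ L) :
    ∀ j, j ≤ k → ∀ N, ∃ s : ℕ → ℕ, (∀ p, p < j → N ≤ s p) ∧
      ∀ i, |glev k H j s i - glev k H 0 (fun _ => 0) i| ≤ L := by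
  intro j
  induction j with
  | zero =>
      intro _ N
      exact ⟨fun _ => 0, fun p hp => by omega, fun i => by simpa using hL0⟩
  | succ j ih =>
      intro hjk N
      obtain ⟨s, hs1, hs2⟩ := ih (by omega) N
      have hj : j < k := by omega
      classical
      set D : Finset ℕ := (glev_supp_finite HB Hsupp hCpt j s).toFinset ∪
        (glev_supp_finite HB Hsupp hCpt 0 (fun _ => 0)).toFinset with hD
      obtain ⟨m, hmT, hmge⟩ := UU_exists_ge (glev_stab HB hj s D) N
      simp only [Set.mem_setOf_eq] at hmT
      refine ⟨Function.update s j m, ?_, ?_⟩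
      · intro p hp
        rcases eq_or_ne p j with rfl | hpj
        · rw [Function.update_self]; exact hmge
        · rw [Function.update_of_ne hpj]; exact hs1 p (by omega)
      · intro i
        by_cases hi : i ∈ D
        · rw [hmT i hi]
          exact hs2 i
        · rw [hD, Finset.mem_union, Set.Finite.mem_toFinset, Set.Finite.mem_toFinset] at hi
          push_neg at hi
          simp only [Set.mem_setOf_eq, not_not] at hi
          rw [hi.2, ← hi.1]
          exact glev_vbound HB HL hj s m i

end Glev2

open scoped Classical in
noncomputable def zcoord (x : czero) (i : ℕ) : ℤ :=
  if h : ∃ z : ℤ, x i = (z : ℝ) then h.choose else 0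

open scoped Classical in
theorem zcoord_spec {x : czero} (hx : ∀ i, ∃ z : ℤ, x i = (z : ℝ)) (i : ℕ) :
    x i = (zcoord x i : ℝ) := by
  rw [zcoord, dif_pos (hx i)]
  exact (hx i).choose_spec

theorem xtup_congr (k : ℕ) (s s' : ℕ → ℕ) (h : ∀ p, p < k → s p = s' p) :
    xtup k s = xtup k s' := by
  ext j
  rw [xtup_apply, xtup_apply]
  congr 1
  rw [cnt, cnt]
  congr 1
  refine Finset.filter_congr (fun i hi => ?_)
  rw [h i (Finset.mem_range.1 hi)]

/-- For every countable ordinal `α`, the Schreier metric space `S_α(ℤ)` does not admit a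
coarse embedding of `c₀`. -/
theorem no_coarse_embedding_c0_into_schreierZ
    (α : Ordinal) (hα : α < (Cardinal.aleph 1).ord)
    (S : Set (Finset ℕ)) (hS : IsSchreierFamily α S) :
    ¬ ∃ φ : czero → schreierZ S, CoarseEmbeddingOn φ := by
  rintro ⟨φ, ρ, ω, hρm, hωm, hρt, hpair⟩
  classical
  have hCpt : Cpt S := cpt_of_schreier hS
  set L : ℤ := max ⌈ω 1⌉ 0 with hLdef
  have hL0 : (0:ℤ) ≤ L := le_max_right _ _
  have hωL : ω 1 ≤ (L : ℝ) := by
    refine le_trans (Int.le_ceil _) ?_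
    exact_mod_cast le_max_left ⌈ω 1⌉ 0
  obtain ⟨x₀, hx₀⟩ := eventually_atTop.1 (hρt.eventually_ge_atTop (((2*L+1 : ℤ) : ℝ)))
  set k : ℕ := ⌈x₀⌉₊ with hkdef
  have hρk : ((2*L+1 : ℤ) : ℝ) ≤ ρ (k : ℝ) := hx₀ (k : ℝ) (Nat.le_ceil x₀)
  set h : (ℕ → ℕ) → czero := fun s => (φ (xtup k s) : czero) with hhdef
  have hmem : ∀ s, (h s) ∈ schreierZ S := fun s => (φ (xtup k s)).2
  set H : (ℕ → ℕ) → ℕ → ℤ := fun s i => zcoord (h s) i with hHdef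
  have hHcoord : ∀ s i, (h s) i = (H s i : ℝ) := fun s i => zcoord_spec (hmem s).1 i
  have hdist_h : ∀ s s', dist (h s) (h s') ≤ ω (dist (xtup k s) (xtup k s')) := by
    intro s s'
    have := (hpair (xtup k s) (xtup k s')).2
    rwa [Subtype.dist_eq] at this
  set B : ℤ := ⌈‖h (fun _ => 0)‖ + ω (k : ℝ)⌉ with hBdef
  have HB : ∀ s i, |H s i| ≤ B := by
    intro s i
    have h1 : |(H s i : ℝ)| ≤ ‖h (fun _ => 0)‖ + ω (k : ℝ) := by
      rw [← hHcoord]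
      refine le_trans (czero_coord_le_norm _ i) ?_
      have t1 : ‖h s‖ ≤ ‖h (fun _ => 0)‖ + dist (h s) (h (fun _ => 0)) := by
        have := dist_triangle (h s) (h (fun _ => 0)) 0
        rwa [dist_zero_right, dist_zero_right, add_comm] at this
      refine le_trans t1 (add_le_add_right ?_ _)
      refine le_trans (hdist_h s (fun _ => 0)) (hωm ?_)
      exact dist_xtup_le_k k s (fun _ => 0)
    have h2 : (|H s i| : ℝ) ≤ (B : ℝ) := by
      push_cast
      exact le_trans h1 (Int.le_ceil _)
    exact_mod_cast h2
  have HL : ∀ s p m m' i, p < k →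
      |H (Function.update s p m) i - H (Function.update s p m') i| ≤ L := by
    intro s p m m' i hp
    have h1 : |(H (Function.update s p m) i : ℝ) - (H (Function.update s p m') i : ℝ)| ≤ (L:ℝ) := by
      rw [← hHcoord, ← hHcoord]
      refine le_trans (czero_coord_le_dist _ _ i) ?_
      refine le_trans (hdist_h _ _) (le_trans (hωm (dist_xtup_le_one k s p m m')) hωL)
    have h2 : (|H (Function.update s p m) i - H (Function.update s p m') i| : ℝ) ≤ (L : ℝ) := by
      push_cast
      push_cast at h1
      exact h1
    exact_mod_cast h2
  have Hsupp : ∀ s (F : Finset ℕ), (∀ i ∈ F, H s i ≠ 0) → ∃ E ∈ S, ∀ i ∈ F, i ∈ E := by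
    intro s F hF
    obtain ⟨hint, E, hE, hsup⟩ := hmem s
    refine ⟨E, hE, fun i hi => hsup i ?_⟩
    rw [hHcoord s i]
    exact_mod_cast hF i hi
  obtain ⟨s₁, _, hs₁⟩ := glev_construct HB HL Hsupp hCpt hL0 k le_rfl 0
  set N : ℕ := (Finset.range k).sup s₁ + 1 with hNdef
  obtain ⟨s₂, hs₂N, hs₂⟩ := glev_construct HB HL Hsupp hCpt hL0 k le_rfl N
  have hlow : (k : ℝ) ≤ dist (xtup k s₁) (xtup k s₂) := by
    refine dist_xtup_ge k s₁ s₂ N (fun i hi => ?_) (fun i hi => hs₂N i hi)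
    have : s₁ i ≤ (Finset.range k).sup s₁ := Finset.le_sup (Finset.mem_range.2 hi)
    omega
  have hZbound : ∀ i, |H s₁ i - H s₂ i| ≤ 2*L := by
    intro i
    have t1 := hs₁ i
    have t2 := hs₂ i
    rw [glev_of_ge H le_rfl] at t1 t2
    have tri := abs_sub_le (H s₁ i) (glev k H 0 (fun _ => 0) i) (H s₂ i)
    have t2' : |glev k H 0 (fun _ => 0) i - H s₂ i| ≤ L := by
      rw [abs_sub_comm]; exact t2
    linarith
  have hupp : dist (h s₁) (h s₂) ≤ ((2*L : ℤ) : ℝ) := by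
    refine czero_dist_le (by exact_mod_cast mul_nonneg (by norm_num) hL0) (fun i => ?_)
    rw [hHcoord, hHcoord]
    have : (|H s₁ i - H s₂ i| : ℝ) ≤ ((2*L:ℤ) : ℝ) := by exact_mod_cast hZbound i
    push_cast at this ⊢
    exact this
  have c1 : ρ (k : ℝ) ≤ ρ (dist (xtup k s₁) (xtup k s₂)) := hρm hlow
  have c2 : ρ (dist (xtup k s₁) (xtup k s₂)) ≤ dist (φ (xtup k s₁)) (φ (xtup k s₂)) :=
    (hpair _ _).1
  have c3 : dist (φ (xtup k s₁)) (φ (xtup k s₂)) = dist (h s₁) (h s₂) := Subtype.dist_eq _ _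
  have : ((2*L+1 : ℤ) : ℝ) ≤ ((2*L : ℤ) : ℝ) := by
    calc ((2*L+1 : ℤ) : ℝ) ≤ ρ (k : ℝ) := hρk
      _ ≤ ((2*L : ℤ) : ℝ) := by rw [c3] at c2; linarith
  push_cast at this
  linarith
end
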